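/- arXiv:1411.5131 — 8 statements merged into one kernel-verified Lean document; each statement's English description precedes it below -/
import Mathlib

section
/- Every regular language admits a finite union-free decomposition: it can be written as a finite union of languages, each denoted by a regular expression that does not use the union operator. -/
inductive UnionFree {α : Type*} : RegularExpression α → Prop
  | epsilon : UnionFree 1
  | char (a : α) : UnionFree (RegularExpression.char a)
  | comp {e1 e2} : UnionFree e1 → UnionFree e2 → UnionFree (e1 * e2)
  | star {e} : UnionFree e → UnionFree (RegularExpression.star e)

namespace UFD

open RegularExpression Computability

variable {α : Type*}

/-- The union of the languages of a list of regular expressions. -/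
def bigU (es : List (RegularExpression α)) : Language α := {w | ∃ e ∈ es, w ∈ e.matches'}

lemma mem_bigU {es : List (RegularExpression α)} {w : List α} :
    w ∈ bigU es ↔ ∃ e ∈ es, w ∈ e.matches' := Iff.rfl

lemma le_bigU {es : List (RegularExpression α)} {f : RegularExpression α} (hf : f ∈ es) :
    f.matches' ≤ bigU es := fun w hw => ⟨f, hf, hw⟩

lemma unionFree_prod : ∀ {es : List (RegularExpression α)}, (∀ e ∈ es, UnionFree e) →
    UnionFree es.prod
  | [], _ => by simpa using UnionFree.epsilon
  | f :: es, h => by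
    rw [List.prod_cons]
    exact UnionFree.comp (h f (by simp)) (unionFree_prod fun e he => h e (by simp [he]))

lemma matches'_prod : ∀ (es : List (RegularExpression α)),
    es.prod.matches' = (es.map matches').prod
  | [] => by simp [matches'_epsilon]
  | f :: es => by
    simp only [List.prod_cons, List.map_cons, matches'_mul, matches'_prod es]

lemma one_le_prod_kstar : ∀ (es : List (RegularExpression α)),
    (1 : Language α) ≤ (es.map (fun g => g.matches'∗)).prod
  | [] => by simp
  | f :: es => by
    simp only [List.map_cons, List.prod_cons]
    calc (1 : Language α) = 1 * 1 := (one_mul 1).symm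
    _ ≤ f.matches'∗ * (es.map (fun g => g.matches'∗)).prod :=
        mul_le_mul' one_le_kstar (one_le_prod_kstar es)

lemma le_prod_kstar : ∀ {es : List (RegularExpression α)} {f : RegularExpression α}, f ∈ es →
    f.matches' ≤ (es.map (fun g => g.matches'∗)).prod
  | [], f, hf => by simp at hf
  | g :: es, f, hf => by
    simp only [List.map_cons, List.prod_cons]
    rcases List.mem_cons.1 hf with rfl | hf
    · calc f.matches' = f.matches' * 1 := (mul_one _).symm
      _ ≤ f.matches'∗ * (es.map (fun g => g.matches'∗)).prod :=
          mul_le_mul' le_kstar (one_le_prod_kstar es)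
    · calc f.matches' = 1 * f.matches' := (one_mul _).symm
      _ ≤ g.matches'∗ * (es.map (fun g => g.matches'∗)).prod :=
          mul_le_mul' one_le_kstar (le_prod_kstar hf)

lemma prod_kstar_le {K : Language α} : ∀ {es : List (RegularExpression α)},
    (∀ f ∈ es, f.matches' ≤ K) → (es.map (fun g => g.matches'∗)).prod ≤ K∗
  | [], _ => by simpa using one_le_kstar
  | f :: es, h => by
    simp only [List.map_cons, List.prod_cons]
    calc f.matches'∗ * (es.map (fun g => g.matches'∗)).prod ≤ K∗ * K∗ :=
        mul_le_mul' (kstar_mono (h f (by simp))) (prod_kstar_le fun e he => h e (by simp [he]))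
    _ = K∗ := kstar_mul_kstar K

/-- Every regular expression's language is a finite union of union-free languages. -/
theorem regex_decomp (e : RegularExpression α) :
    ∃ es : List (RegularExpression α), (∀ f ∈ es, UnionFree f) ∧ e.matches' = bigU es := by
  induction e with
  | zero =>
    refine ⟨[], by simp, ?_⟩
    ext w
    simp [mem_bigU, matches'_zero]
  | epsilon =>
    refine ⟨[1], by rintro f hf; simp at hf; subst hf; exact UnionFree.epsilon, ?_⟩
    ext w; simp [mem_bigU, matches'_epsilon, Language.mem_one]
  | char a =>
    refine ⟨[char a], by rintro f hf; simp at hf; subst hf; exact UnionFree.char a, ?_⟩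
    ext w; simp [mem_bigU, matches'_char]
  | plus e1 e2 ih1 ih2 =>
    obtain ⟨es1, h1, he1⟩ := ih1
    obtain ⟨es2, h2, he2⟩ := ih2
    refine ⟨es1 ++ es2, ?_, ?_⟩
    · intro f hf; rcases List.mem_append.1 hf with h | h
      exacts [h1 f h, h2 f h]
    · ext w
      rw [show e1.plus e2 = e1 + e2 from rfl, matches'_add, he1, he2]
      simp only [Language.mem_add, mem_bigU, List.mem_append]
      constructor
      · rintro (⟨f, hf, hw⟩ | ⟨f, hf, hw⟩)
        exacts [⟨f, Or.inl hf, hw⟩, ⟨f, Or.inr hf, hw⟩]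
      · rintro ⟨f, hf | hf, hw⟩
        exacts [Or.inl ⟨f, hf, hw⟩, Or.inr ⟨f, hf, hw⟩]
  | comp e1 e2 ih1 ih2 =>
    obtain ⟨es1, h1, he1⟩ := ih1
    obtain ⟨es2, h2, he2⟩ := ih2
    refine ⟨es1.flatMap (fun f => es2.map (f * ·)), ?_, ?_⟩
    · intro f hf
      simp only [List.mem_flatMap, List.mem_map] at hf
      obtain ⟨f1, hf1, f2, hf2, rfl⟩ := hf
      exact UnionFree.comp (h1 f1 hf1) (h2 f2 hf2)
    · ext w
      rw [show e1.comp e2 = e1 * e2 from rfl, matches'_mul, he1, he2]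
      simp only [Language.mem_mul, mem_bigU, List.mem_flatMap, List.mem_map]
      constructor
      · rintro ⟨u, ⟨f1, hf1, hu⟩, v, ⟨f2, hf2, hv⟩, rfl⟩
        exact ⟨f1 * f2, ⟨f1, hf1, f2, hf2, rfl⟩, by
          rw [matches'_mul]; exact ⟨u, hu, v, hv, rfl⟩⟩
      · rintro ⟨f, ⟨f1, hf1, f2, hf2, rfl⟩, hw⟩
        rw [matches'_mul] at hw
        obtain ⟨u, hu, v, hv, rfl⟩ := hw
        exact ⟨u, ⟨f1, hf1, hu⟩, v, ⟨f2, hf2, hv⟩, rfl⟩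
  | star e ih =>
    obtain ⟨es, h, he⟩ := ih
    refine ⟨[RegularExpression.star ((es.map RegularExpression.star).prod)], ?_, ?_⟩
    · rintro f hf; simp at hf; subst hf
      exact UnionFree.star (unionFree_prod (by
        intro g hg
        simp only [List.mem_map] at hg
        obtain ⟨g', hg', rfl⟩ := hg
        exact UnionFree.star (h g' hg')))
    · have hU : bigU [RegularExpression.star ((es.map RegularExpression.star).prod)]
          = ((es.map (fun g => g.matches'∗)).prod)∗ := by
        ext w
        simp only [mem_bigU, List.mem_singleton, exists_eq_left, matches'_star,
          matches'_prod, List.map_map]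
        rfl
      rw [hU, matches'_star, he]
      apply le_antisymm
      · exact (kstar_mono (fun w hw => by
          obtain ⟨f, hf, hw⟩ := hw
          exact le_prod_kstar hf hw)).trans le_rfl
      · calc ((es.map (fun g => g.matches'∗)).prod)∗ ≤ ((bigU es)∗)∗ :=
            kstar_mono (prod_kstar_le fun f hf => le_bigU hf)
        _ = (bigU es)∗ := kstar_idem _


variable {σ : Type*} (M : DFA α σ)


/-- The list of states visited after each nonempty prefix of `w`, starting from `p`. -/
def trace : σ → List α → List σ
  | _, [] => []
  | p, a :: w => M.step p a :: trace (M.step p a) w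

@[simp] lemma trace_nil (p : σ) : trace M p [] = [] := rfl

lemma trace_cons (p : σ) (a : α) (w : List α) :
    trace M p (a :: w) = M.step p a :: trace M (M.step p a) w := rfl

lemma length_trace (p : σ) (w : List α) : (trace M p w).length = w.length := by
  induction w generalizing p with
  | nil => rfl
  | cons a w ih => simp [trace_cons, ih]

lemma evalFrom_cons (p : σ) (a : α) (w : List α) :
    M.evalFrom p (a :: w) = M.evalFrom (M.step p a) w := rfl

lemma evalFrom_eq_getLastD (p : σ) (w : List α) :
    M.evalFrom p w = (trace M p w).getLastD p := by
  induction w generalizing p with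
  | nil => rfl
  | cons a w ih => rw [evalFrom_cons, trace_cons, List.getLastD_cons, ih]

lemma trace_append (p : σ) (u v : List α) :
    trace M p (u ++ v) = trace M p u ++ trace M (M.evalFrom p u) v := by
  induction u generalizing p with
  | nil => rfl
  | cons a u ih => simp only [List.cons_append, trace_cons, ih, evalFrom_cons]

lemma trace_take (p : σ) (w : List α) (n : ℕ) :
    trace M p (w.take n) = (trace M p w).take n := by
  induction w generalizing p n with
  | nil => simp
  | cons a w ih =>
    cases n with
    | zero => simp
    | succ n => simp [trace_cons, ih]

lemma mem_trace (p : σ) (w : List α) {x : σ} (hx : x ∈ trace M p w) :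
    x ∈ (trace M p w).dropLast ∨ x = M.evalFrom p w := by
  induction w generalizing p with
  | nil => simp at hx
  | cons a w ih =>
    rw [trace_cons] at hx ⊢
    rcases w with _ | ⟨b, w⟩
    · simp at hx
      simp [hx, evalFrom_cons]
    · rw [List.dropLast_cons_of_ne_nil (by simp [trace_cons])]
      rcases List.mem_cons.1 hx with rfl | hx
      · exact Or.inl List.mem_cons_self
      · rcases ih _ hx with h | h
        · exact Or.inl (List.mem_cons_of_mem _ h)
        · exact Or.inr (h.trans (evalFrom_cons M p a _).symm)

/-- Words leading from `p` to `q` all of whose intermediate states lie in `S`. -/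
def W (p q : σ) (S : Set σ) : Language α :=
  {w | M.evalFrom p w = q ∧ ∀ x ∈ (trace M p w).dropLast, x ∈ S}

lemma W_mono {S T : Set σ} (h : S ⊆ T) (p q : σ) : W M p q S ≤ W M p q T :=
  fun _ hw => ⟨hw.1, fun x hx => h (hw.2 x hx)⟩

lemma nil_mem_W (s : σ) (T : Set σ) : [] ∈ W M s s T := ⟨rfl, by simp⟩

lemma append_mem_W {p r q : σ} {T : Set σ} {w1 w2 : List α}
    (h1 : w1 ∈ W M p r T) (h2 : w2 ∈ W M r q T) (hr : r ∈ T) : w1 ++ w2 ∈ W M p q T := by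
  obtain ⟨e1, i1⟩ := h1
  obtain ⟨e2, i2⟩ := h2
  refine ⟨by rw [M.evalFrom_of_append, e1, e2], ?_⟩
  intro x hx
  rw [trace_append, e1] at hx
  rcases eq_or_ne w2 [] with rfl | hne
  · simp only [trace_nil, List.append_nil] at hx
    exact i1 x hx
  · have hte : trace M r w2 ≠ [] := by
      intro h
      apply hne
      have := length_trace M r w2
      rw [h] at this
      exact List.length_eq_zero_iff.1 this.symm
    rw [List.dropLast_append_of_ne_nil hte, List.mem_append] at hx
    rcases hx with hx | hx
    · rcases mem_trace M p w1 hx with h | h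
      · exact i1 x h
      · rw [h, e1]; exact hr
    · exact i2 x hx

lemma kstar_mem_W {s : σ} {T : Set σ} (hs : s ∈ T) {w : List α}
    (hw : w ∈ (W M s s T)∗) : w ∈ W M s s T := by
  rw [Language.mem_kstar] at hw
  obtain ⟨L, rfl, hL⟩ := hw
  induction L with
  | nil => exact nil_mem_W M s T
  | cons l L ih =>
    rw [List.flatten_cons]
    exact append_mem_W M (hL l (by simp)) (ih fun y hy => hL y (by simp [hy])) hs

lemma first_split {x : σ} : ∀ {l : List σ}, x ∈ l → ∃ l1 l2, l = l1 ++ x :: l2 ∧ x ∉ l1 := by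
  intro l hl
  induction l with
  | nil => simp at hl
  | cons a l ih =>
    by_cases hax : a = x
    · exact ⟨[], l, by simp [hax], by simp⟩
    · have hxl : x ∈ l := by
        rcases List.mem_cons.1 hl with h | h
        · exact absurd h.symm hax
        · exact h
      rcases ih hxl with ⟨l1, l2, rfl, hx1⟩
      refine ⟨a :: l1, l2, rfl, ?_⟩
      simp only [List.mem_cons, not_or]
      exact ⟨fun h => hax h.symm, hx1⟩

lemma take_len_succ (l1 : List σ) (x : σ) (l2 : List σ) :
    (l1 ++ x :: l2).take (l1.length + 1) = l1 ++ [x] := by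
  induction l1 with
  | nil => simp
  | cons a l1 ih => simp [ih]

lemma W_insert_le (s : σ) (S : Set σ) (q : σ) :
    ∀ (n : ℕ) (w : List α), w.length ≤ n → ∀ p, w ∈ W M p q (insert s S) →
      w ∈ W M p q S ∨ w ∈ W M p s S * ((W M s s S)∗ * W M s q S) := by
  intro n
  induction n with
  | zero =>
    intro w hw p hmem
    left
    rcases List.length_eq_zero_iff.1 (Nat.le_zero.1 hw) with rfl
    exact ⟨hmem.1, by simp⟩
  | succ n ih =>
    intro w hw p hmem
    obtain ⟨heval, hinter⟩ := hmem
    by_cases hall : ∀ x ∈ (trace M p w).dropLast, x ∈ S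
    · exact Or.inl ⟨heval, hall⟩
    right
    push_neg at hall
    obtain ⟨y, hy, hyS⟩ := hall
    have hys : y = s := by
      rcases hinter y hy with h | h
      · exact h
      · exact absurd h hyS
    rw [hys] at hy hyS
    -- `y = s` occurs among the intermediate states; split at the first occurrence of `s`
    obtain ⟨l1, l2, ht, hs1⟩ := first_split (List.dropLast_subset _ hy)
    set i := l1.length with hi
    -- basic facts about the split
    have hlen_t : (trace M p w).length = w.length := length_trace M p w
    have hl2ne : l2 ≠ [] := by
      intro h
      subst h
      rw [ht, List.dropLast_concat] at hy
      exact hs1 hy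
    have hdrop_t : (trace M p w).dropLast = l1 ++ s :: l2.dropLast := by
      rw [ht, show l1 ++ s :: l2 = l1 ++ ((s :: l2)) from rfl,
        List.dropLast_append_of_ne_nil (by simp : s :: l2 ≠ []), List.dropLast_cons_of_ne_nil hl2ne]
    have hl2pos : 0 < l2.length := List.length_pos_iff.2 hl2ne
    have hilt : i + 1 < w.length := by
      have hlen : (l1 ++ s :: l2).length = w.length := by rw [← ht, hlen_t]
      simp only [List.length_append, List.length_cons] at hlen
      omega
    set u := w.take (i + 1) with hu
    set v := w.drop (i + 1) with hv
    have huv : u ++ v = w := List.take_append_drop _ _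
    have htu : trace M p u = l1 ++ [s] := by
      rw [hu, trace_take, ht, take_len_succ]
    have hevalu : M.evalFrom p u = s := by
      rw [evalFrom_eq_getLastD, htu, List.getLastD_concat]
    have huW : u ∈ W M p s S := by
      refine ⟨hevalu, ?_⟩
      intro x hx
      rw [htu, List.dropLast_concat] at hx
      have hxd : x ∈ (trace M p w).dropLast := by rw [hdrop_t]; exact List.mem_append_left _ hx
      rcases hinter x hxd with h | h
      · exact absurd (h ▸ hx) hs1
      · exact h
    have htv : trace M s v = l2 := by
      have h1 : trace M p w = trace M p u ++ trace M (M.evalFrom p u) v := by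
        rw [← huv, trace_append]
      rw [ht, htu, hevalu] at h1
      simp only [List.append_assoc, List.singleton_append] at h1
      exact ((List.cons.inj (List.append_cancel_left h1)).2).symm
    have hvW : v ∈ W M s q (insert s S) := by
      refine ⟨?_, ?_⟩
      · have := M.evalFrom_of_append p u v
        rw [huv, hevalu, heval] at this
        exact this.symm
      · intro x hx
        rw [htv] at hx
        apply hinter
        rw [hdrop_t]
        exact List.mem_append_right _ (List.mem_cons_of_mem _ hx)
    have hvlen : v.length ≤ n := by
      rw [hv, List.length_drop]
      omega
    rcases ih v hvlen s hvW with h | h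
    · exact ⟨u, huW, v, ⟨[], Language.nil_mem_kstar _, v, h, by simp⟩, huv⟩
    · obtain ⟨v1, hv1, v', ⟨v2, hv2, v3, hv3, rfl⟩, hvv⟩ := h
      refine ⟨u, huW, v1 ++ (v2 ++ v3), ⟨v1 ++ v2, ?_, v3, hv3, by simp⟩, ?_⟩
      · exact mul_kstar_le_kstar (a := W M s s S) ⟨v1, hv1, v2, hv2, rfl⟩
      · rw [← huv, ← hvv]

lemma W_insert (s : σ) (S : Set σ) (p q : σ) :
    W M p q (insert s S) = W M p q S + W M p s S * (W M s s S)∗ * W M s q S := by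
  apply le_antisymm
  · intro w hw
    rcases W_insert_le M s S q w.length w le_rfl p hw with h | h
    · exact Or.inl h
    · rw [mul_assoc]
      exact Or.inr h
  · intro w hw
    rcases hw with h | h
    · exact W_mono M (Set.subset_insert s S) p q h
    · obtain ⟨u', ⟨u1, hu1, u2, hu2, rfl⟩, u3, hu3, rfl⟩ := h
      have hsT : s ∈ insert s S := Set.mem_insert s S
      have h1 : u1 ∈ W M p s (insert s S) := W_mono M (Set.subset_insert s S) _ _ hu1
      have h2 : u2 ∈ W M s s (insert s S) :=
        kstar_mem_W M hsT (kstar_mono (W_mono M (Set.subset_insert s S) s s) hu2)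
      have h3 : u3 ∈ W M s q (insert s S) := W_mono M (Set.subset_insert s S) _ _ hu3
      exact append_mem_W M (append_mem_W M h1 h2 hsT) h3 hsT

section Regex

variable [Fintype α]

open Classical in
/-- The McNaughton–Yamada regular expression for words leading from `p` to `q` with
intermediate states in `L`. -/
noncomputable def Ereg (M : DFA α σ) : σ → σ → List σ → RegularExpression α
  | p, q, [] => (if p = q then 1 else 0) +
      ((Finset.univ.filter fun a : α => M.step p a = q).toList.map char).sum
  | p, q, s :: L => Ereg M p q L + Ereg M p s L * (Ereg M s s L).star * Ereg M s q L

lemma mem_matches'_sum : ∀ (l : List (RegularExpression α)) (w : List α),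
    w ∈ l.sum.matches' ↔ ∃ e ∈ l, w ∈ e.matches'
  | [], w => by simp [matches'_zero]
  | e :: l, w => by
    rw [List.sum_cons, matches'_add]
    simp only [Language.mem_add, mem_matches'_sum l w, List.mem_cons]
    constructor
    · rintro (h | ⟨f, hf, hw⟩)
      exacts [⟨e, Or.inl rfl, h⟩, ⟨f, Or.inr hf, hw⟩]
    · rintro ⟨f, rfl | hf, hw⟩
      exacts [Or.inl hw, Or.inr ⟨f, hf, hw⟩]

lemma W_nil (p q : σ) (w : List α) :
    w ∈ W M p q {x | x ∈ ([] : List σ)} ↔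
      (w = [] ∧ p = q) ∨ ∃ a, w = [a] ∧ M.step p a = q := by
  constructor
  · rintro ⟨heval, hinter⟩
    match w with
    | [] => exact Or.inl ⟨rfl, heval⟩
    | [a] => exact Or.inr ⟨a, rfl, heval⟩
    | a :: b :: w' =>
      exfalso
      have hmem : M.step p a ∈ (trace M p (a :: b :: w')).dropLast := by
        rw [trace_cons, List.dropLast_cons_of_ne_nil (by simp [trace_cons])]
        exact List.mem_cons_self
      simpa using hinter _ hmem
  · rintro (⟨rfl, rfl⟩ | ⟨a, rfl, ha⟩)
    · exact ⟨rfl, by simp⟩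
    · exact ⟨ha, by simp [trace_cons]⟩

lemma Ereg_matches (M : DFA α σ) : ∀ (L : List σ) (p q : σ),
    (Ereg M p q L).matches' = W M p q {x | x ∈ L}
  | [], p, q => by
    classical
    ext w
    rw [W_nil]
    simp only [Ereg, matches'_add, Language.mem_add, mem_matches'_sum, List.mem_map,
      Finset.mem_toList, Finset.mem_filter, Finset.mem_univ, true_and, matches'_char]
    by_cases hpq : p = q
    · rw [if_pos hpq]
      subst hpq
      simp only [matches'_epsilon, Language.mem_one]
      constructor
      · rintro (h | ⟨e, ⟨a, ha, rfl⟩, hw⟩)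
        · exact Or.inl ⟨h, trivial⟩
        · exact Or.inr ⟨a, hw, ha⟩
      · rintro (⟨h, -⟩ | ⟨a, rfl, ha⟩)
        · exact Or.inl h
        · exact Or.inr ⟨char a, ⟨a, ha, rfl⟩, rfl⟩
    · rw [if_neg hpq]
      simp only [matches'_zero]
      constructor
      · rintro (h | ⟨e, ⟨a, ha, rfl⟩, hw⟩)
        · exact absurd h (Language.notMem_zero w)
        · exact Or.inr ⟨a, hw, ha⟩
      · rintro (⟨-, h⟩ | ⟨a, rfl, ha⟩)
        · exact absurd h hpq
        · exact Or.inr ⟨char a, ⟨a, ha, rfl⟩, rfl⟩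
  | s :: L, p, q => by
    have hset : {x : σ | x ∈ s :: L} = insert s {x : σ | x ∈ L} := by
      ext x; simp [List.mem_cons]
    rw [show Ereg M p q (s :: L) =
      Ereg M p q L + Ereg M p s L * (Ereg M s s L).star * Ereg M s q L from rfl]
    rw [matches'_add, matches'_mul, matches'_mul, matches'_star, Ereg_matches M L p q,
      Ereg_matches M L p s, Ereg_matches M L s s, Ereg_matches M L s q, hset, W_insert]

theorem exists_regex (M : DFA α σ) [Fintype σ] :
    ∃ e : RegularExpression α, e.matches' = M.accepts := by
  classical
  refine ⟨((Finset.univ.filter (· ∈ M.accept)).toList.map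
      fun q => Ereg M M.start q Finset.univ.toList).sum, ?_⟩
  have huniv : {x : σ | x ∈ (Finset.univ : Finset σ).toList} = Set.univ := by
    ext x; simp
  ext w
  rw [mem_matches'_sum]
  simp only [List.mem_map, Finset.mem_toList, Finset.mem_filter, Finset.mem_univ, true_and]
  constructor
  · rintro ⟨e, ⟨q, hq, rfl⟩, hw⟩
    rw [Ereg_matches, huniv] at hw
    refine (DFA.mem_accepts M).2 ?_
    show M.evalFrom M.start w ∈ M.accept
    rw [hw.1]
    exact hq
  · intro hw
    refine ⟨_, ⟨M.eval w, (DFA.mem_accepts M).1 hw, rfl⟩, ?_⟩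
    rw [Ereg_matches, huniv]
    exact ⟨rfl, fun x _ => Set.mem_univ x⟩

end Regex

end UFD

/-- Every regular language admits a finite union-free decomposition: it is the union
of the languages of finitely many union-free regular expressions. -/
theorem exists_union_free_decomposition {α : Type} [Fintype α] (R : Language α)
    (hR : R.IsRegular) :
    ∃ es : List (RegularExpression α), (∀ e ∈ es, UnionFree e) ∧
      R = {w | ∃ e ∈ es, w ∈ e.matches'} := by
  obtain ⟨σ, hfin, M, hM⟩ := hR
  haveI := hfin
  obtain ⟨e, he⟩ := UFD.exists_regex M
  obtain ⟨es, hes, hdec⟩ := UFD.regex_decomp e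
  exact ⟨es, hes, by rw [← hM, ← he, hdec]; rfl⟩
end

section
/- For any union-free regular expression e, the union of the languages of all elements of the star-contraction κ(e) equals L(e); in particular e ∈ κ(e) up to language equivalence, so ⋃{ L(r) | r ∈ κ(e) } = L(e). -/
noncomputable def bigUnion {α : Type*} (E : Finset (RegularExpression α)) : RegularExpression α :=
  E.toList.foldr (· + ·) 0

noncomputable def kappa {α : Type*} : RegularExpression α → Set (RegularExpression α)
  | .zero => ∅
  | .epsilon => {1}
  | .char a => {RegularExpression.char a}
  | .plus _ _ => ∅
  | .comp e1 e2 => {r | ∃ r1 ∈ kappa e1, ∃ r2 ∈ kappa e2, r = r1 * r2}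
  | .star e => {r | ∃ E : Finset (RegularExpression α), ↑E ⊆ kappa e ∧ r = (bigUnion E).star}

lemma foldr_matches {α : Type} (l : List (RegularExpression α)) (w : List α) :
    w ∈ (l.foldr (· + ·) (0 : RegularExpression α)).matches' ↔ ∃ r ∈ l, w ∈ r.matches' := by
  induction l with
  | nil => simp [RegularExpression.matches'_zero]
  | cons a l ih =>
    simp [RegularExpression.matches'_add, Language.mem_add, ih]

lemma bigUnion_matches {α : Type} (E : Finset (RegularExpression α)) (w : List α) :
    w ∈ (bigUnion E).matches' ↔ ∃ r ∈ E, w ∈ r.matches' := by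
  rw [bigUnion, foldr_matches]
  simp

lemma kappa_sub {α : Type} {e : RegularExpression α} (h : UnionFree e) :
    ∀ r ∈ kappa e, ∀ w, w ∈ r.matches' → w ∈ e.matches' := by
  induction h with
  | epsilon => intro r hr w hw; simp only [kappa, Set.mem_singleton_iff] at hr; subst hr; exact hw
  | char a => intro r hr w hw; simp only [kappa, Set.mem_singleton_iff] at hr; subst hr; exact hw
  | comp h1 h2 ih1 ih2 =>
    rintro r ⟨r1, hr1, r2, hr2, rfl⟩ w hw
    rw [RegularExpression.matches'_mul, Language.mem_mul] at hw ⊢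
    obtain ⟨a, ha, b, hb, rfl⟩ := hw
    exact ⟨a, ih1 r1 hr1 a ha, b, ih2 r2 hr2 b hb, rfl⟩
  | star h ih =>
    rintro r ⟨E, hE, rfl⟩ w hw
    rw [RegularExpression.matches'_star, Language.mem_kstar] at hw ⊢
    obtain ⟨L, rfl, hL⟩ := hw
    refine ⟨L, rfl, fun y hy => ?_⟩
    obtain ⟨s, hs, hys⟩ := (bigUnion_matches E y).mp (hL y hy)
    exact ih s (hE hs) y hys

lemma kappa_cover {α : Type} {e : RegularExpression α} (h : UnionFree e) :
    ∀ w, w ∈ e.matches' → ∃ r ∈ kappa e, w ∈ r.matches' := by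
  classical
  induction h with
  | epsilon => intro w hw; exact ⟨1, rfl, hw⟩
  | char a => intro w hw; exact ⟨_, rfl, hw⟩
  | comp h1 h2 ih1 ih2 =>
    intro w hw
    rw [RegularExpression.matches'_mul, Language.mem_mul] at hw
    obtain ⟨a, ha, b, hb, rfl⟩ := hw
    obtain ⟨r1, hr1, ha'⟩ := ih1 a ha
    obtain ⟨r2, hr2, hb'⟩ := ih2 b hb
    refine ⟨r1 * r2, ⟨r1, hr1, r2, hr2, rfl⟩, ?_⟩
    rw [RegularExpression.matches'_mul, Language.mem_mul]
    exact ⟨a, ha', b, hb', rfl⟩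
  | @star e h ih =>
    intro w hw
    rw [RegularExpression.matches'_star, Language.mem_kstar] at hw
    obtain ⟨L, rfl, hL⟩ := hw
    -- build a finset of regexes covering all words in L
    have : ∃ E : Finset (RegularExpression α), ↑E ⊆ kappa e ∧
        ∀ y ∈ L, ∃ r ∈ E, y ∈ r.matches' := by
      induction L with
      | nil => exact ⟨∅, by simp, by simp⟩
      | cons y L ihL =>
        obtain ⟨E, hE, hcov⟩ := ihL (fun z hz => hL z (List.mem_cons_of_mem _ hz))
        obtain ⟨r, hr, hy⟩ := ih y (hL y List.mem_cons_self)
        refine ⟨insert r E, ?_, ?_⟩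
        · intro s hs
          simp only [Finset.coe_insert, Set.mem_insert_iff] at hs
          rcases hs with rfl | hs
          · exact hr
          · exact hE hs
        · intro z hz
          rcases List.mem_cons.mp hz with rfl | hz
          · exact ⟨r, Finset.mem_insert_self _ _, hy⟩
          · obtain ⟨s, hs, hzs⟩ := hcov z hz
            exact ⟨s, Finset.mem_insert_of_mem hs, hzs⟩
    obtain ⟨E, hE, hcov⟩ := this
    refine ⟨(bigUnion E).star, ⟨E, hE, rfl⟩, ?_⟩
    rw [RegularExpression.matches'_star, Language.mem_kstar]
    refine ⟨L, rfl, fun y hy => ?_⟩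
    obtain ⟨r, hr, hyr⟩ := hcov y hy
    exact (bigUnion_matches E y).mpr ⟨r, hr, hyr⟩

/-- The union of the languages of the elements of the star-contraction of a union-free
regular expression `e` equals `L(e)`. -/
theorem kappa_union_eq {α : Type} (e : RegularExpression α) (h : UnionFree e) :
    ({w | ∃ r ∈ kappa e, w ∈ r.matches'} : Language α) = e.matches' := by
  ext w
  constructor
  · rintro ⟨r, hr, hw⟩
    exact kappa_sub h r hr w hw
  · exact kappa_cover h w
end

section
/- For every union-free regular expression e and every word w ∈ L(e), the intersection κ(e) ∩ Ξ(w) is nonempty; that is, some star-generalization of w belongs to the star-contraction of e. -/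
open Computability


/-- The regular expression denoting a single word. -/
def wordExpr {α : Type*} : List α → RegularExpression α
  | [] => 1
  | x :: xs => RegularExpression.char x * wordExpr xs

/-- `InXi w r` means `r` is a star-generalization of the word `w`, i.e. `r ∈ Ξ(w)`. -/
inductive InXi {α : Type*} : List α → RegularExpression α → Prop
  | nil : InXi [] 1
  | base (w : List α) (h : w ≠ []) : InXi w (wordExpr w)
  | baseStar (w : List α) (h : w ≠ []) : InXi w (wordExpr w).star
  | comp {w1 w2 : List α} {e1 e2} (h1 : w1 ≠ []) (h2 : w2 ≠ []) :
      InXi w1 e1 → InXi w2 e2 → InXi (w1 ++ w2) (e1 * e2)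
  | compStar {w1 w2 : List α} {e1 e2} (h1 : w1 ≠ []) (h2 : w2 ≠ []) :
      InXi w1 e1 → InXi w2 e2 → InXi (w1 ++ w2) ((e1 * e2).star)

/- ------------------- auxiliary lemmas ------------------- -/

lemma inXi_nil_eq' {α : Type*} {w : List α} {r : RegularExpression α} (h : InXi w r)
    (hw : w = []) : r = 1 := by
  induction h with
  | nil => rfl
  | base w hw' => exact absurd hw hw'
  | baseStar w hw' => exact absurd hw hw'
  | comp h1 h2 _ _ _ _ => exact absurd (List.append_eq_nil_iff.mp hw).1 h1
  | compStar h1 h2 _ _ _ _ => exact absurd (List.append_eq_nil_iff.mp hw).1 h1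

lemma inXi_nil_eq {α : Type*} {r : RegularExpression α} (h : InXi [] r) : r = 1 :=
  inXi_nil_eq' h rfl

/-- Given a star-generalization `t` of a nonempty word `w`, there is a star-generalization
whose language is `(t.matches')∗`. -/
lemma inXi_star {α : Type*} {w : List α} {t : RegularExpression α} (hw : w ≠ [])
    (h : InXi w t) : ∃ t', InXi w t' ∧ t'.matches' = (t.matches')∗ := by
  cases h with
  | nil => exact absurd rfl hw
  | base w hw' => exact ⟨(wordExpr w).star, InXi.baseStar w hw', RegularExpression.matches'_star _⟩
  | baseStar w hw' =>
      exact ⟨(wordExpr w).star, InXi.baseStar w hw',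
        by rw [RegularExpression.matches'_star, kstar_idem]⟩
  | comp h1 h2 hx1 hx2 =>
      exact ⟨_, InXi.compStar h1 h2 hx1 hx2, RegularExpression.matches'_star _⟩
  | compStar h1 h2 hx1 hx2 =>
      exact ⟨_, InXi.compStar h1 h2 hx1 hx2,
        by rw [RegularExpression.matches'_star, kstar_idem]⟩

lemma mem_bigUnion_matches {α : Type*} {E : Finset (RegularExpression α)} {x : List α} :
    x ∈ (bigUnion E).matches' ↔ ∃ r ∈ E, x ∈ r.matches' := by
  unfold bigUnion
  have : ∀ l : List (RegularExpression α),
      x ∈ (l.foldr (· + ·) 0).matches' ↔ ∃ r ∈ l, x ∈ r.matches' := by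
    intro l
    induction l with
    | nil => simp [RegularExpression.matches'_zero]
    | cons a l ih =>
        simp only [List.foldr_cons, RegularExpression.matches'_add, List.mem_cons]
        constructor
        · rintro (h | h)
          · exact ⟨a, Or.inl rfl, h⟩
          · obtain ⟨r, hr, hx⟩ := ih.mp h
            exact ⟨r, Or.inr hr, hx⟩
        · rintro ⟨r, (rfl | hr), hx⟩
          · exact Or.inl hx
          · exact Or.inr (ih.mpr ⟨r, hr, hx⟩)
  rw [this]
  simp [Finset.mem_toList]

lemma flatten_ne_nil' {α : Type*} {L : List (List α)} (hL : L ≠ [])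
    (h : ∀ w ∈ L, w ≠ []) : L.flatten ≠ [] := by
  cases L with
  | nil => exact absurd rfl hL
  | cons a l =>
      have ha : a ≠ [] := h a List.mem_cons_self
      simp only [List.flatten_cons, ne_eq, List.append_eq_nil_iff]
      rintro ⟨rfl, -⟩
      exact ha rfl

lemma flatten_filter_ne_nil {α : Type*} (L : List (List α)) :
    (L.filter (fun x => !x.isEmpty)).flatten = L.flatten := by
  induction L with
  | nil => rfl
  | cons a l ihl =>
      by_cases ha : a = []
      · subst ha
        simpa using ihl
      · rw [List.filter_cons_of_pos (by simpa using ha), List.flatten_cons,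
          List.flatten_cons, ihl]

/-- Key combinatorial lemma for the star case. -/
lemma star_aux {α : Type} (e : RegularExpression α)
    (IH : ∀ w ∈ e.matches',
      ∃ r ∈ kappa e, ∃ r' : RegularExpression α, InXi w r' ∧ r.matches' = r'.matches')
    (L : List (List α)) (hL : L ≠ []) (hmem : ∀ wi ∈ L, wi ≠ [] ∧ wi ∈ e.matches') :
    ∃ S : Finset (RegularExpression α), ↑S ⊆ kappa e ∧
      ∃ t, InXi L.flatten t ∧ (1 : Language α) ≤ t.matches' ∧
        t.matches' ≤ ((bigUnion S).matches')∗ ∧ (bigUnion S).matches' ≤ t.matches' := by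
  classical
  induction L with
  | nil => exact absurd rfl hL
  | cons w1 L ih =>
      obtain ⟨hw1, hw1e⟩ := hmem w1 List.mem_cons_self
      obtain ⟨r1, hr1κ, r1', hr1x, hr1l⟩ := IH w1 hw1e
      obtain ⟨s1, hs1x, hs1l⟩ := inXi_star hw1 hr1x
      rw [← hr1l] at hs1l
      cases L with
      | nil =>
          refine ⟨{r1}, by simpa using hr1κ, s1, ?_, ?_, ?_, ?_⟩
          · simpa using hs1x
          · rw [hs1l]; exact one_le_kstar
          · intro x hx
            rw [hs1l] at hx
            have hsub : r1.matches' ≤ (bigUnion ({r1} : Finset (RegularExpression α))).matches' :=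
              fun y hy => mem_bigUnion_matches.mpr ⟨r1, Finset.mem_singleton_self _, hy⟩
            exact kstar_mono hsub hx
          · intro x hx
            obtain ⟨r, hr, hxr⟩ := mem_bigUnion_matches.mp hx
            rw [Finset.mem_singleton] at hr
            subst hr
            rw [hs1l]
            exact le_kstar (a := r.matches') hxr
      | cons w2 L' =>
          obtain ⟨S, hSκ, t, htx, ht1, htU, hUt⟩ :=
            ih (by simp) (fun wi hwi => hmem wi (List.mem_cons_of_mem _ hwi))
          refine ⟨insert r1 S, ?_, s1 * t, ?_, ?_, ?_, ?_⟩
          · rw [Finset.coe_insert]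
            exact Set.insert_subset hr1κ hSκ
          · have hflat : (w2 :: L').flatten ≠ [] :=
              flatten_ne_nil' (by simp) (fun wi hwi => (hmem wi (List.mem_cons_of_mem _ hwi)).1)
            rw [List.flatten_cons]
            exact InXi.comp hw1 hflat hs1x htx
          · rw [RegularExpression.matches'_mul, hs1l]
            calc (1 : Language α) = 1 * 1 := (one_mul 1).symm
              _ ≤ _ := mul_le_mul' one_le_kstar ht1
          · rw [RegularExpression.matches'_mul, hs1l]
            have hU' : (bigUnion S).matches' ≤ (bigUnion (insert r1 S)).matches' := by
              intro x hx
              obtain ⟨r, hr, hxr⟩ := mem_bigUnion_matches.mp hx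
              exact mem_bigUnion_matches.mpr ⟨r, Finset.mem_insert_of_mem hr, hxr⟩
            have h1U' : r1.matches' ≤ (bigUnion (insert r1 S)).matches' := by
              intro x hx
              exact mem_bigUnion_matches.mpr ⟨r1, Finset.mem_insert_self _ _, hx⟩
            calc (r1.matches')∗ * t.matches'
                ≤ ((bigUnion (insert r1 S)).matches')∗ * ((bigUnion (insert r1 S)).matches')∗ :=
                  mul_le_mul' (kstar_mono h1U') (htU.trans (kstar_mono hU'))
              _ = _ := kstar_mul_kstar _
          · rw [RegularExpression.matches'_mul, hs1l]
            intro x hx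
            obtain ⟨r, hr, hxr⟩ := mem_bigUnion_matches.mp hx
            rw [Finset.mem_insert] at hr
            rcases hr with rfl | hr
            · have : x ∈ ((r.matches')∗ : Language α) := le_kstar (a := r.matches') hxr
              exact ⟨x, this, [], ht1 rfl, by simp⟩
            · have hxt : x ∈ t.matches' := hUt (mem_bigUnion_matches.mpr ⟨r, hr, hxr⟩)
              exact ⟨[], one_le_kstar (a := r1.matches') rfl, x, hxt, by simp⟩

/-- For every union-free regular expression `e` and every word `w ∈ L(e)`,
`κ(e) ∩ Ξ(w) ≠ ∅` (membership taken up to language equality of expressions). -/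
theorem kappa_inter_xi_nonempty {α : Type} (e : RegularExpression α) (hUF : UnionFree e)
    (w : List α) (hw : w ∈ e.matches') :
    ∃ r ∈ kappa e, ∃ r' : RegularExpression α, InXi w r' ∧ r.matches' = r'.matches' := by
  classical
  induction hUF generalizing w with
  | epsilon =>
      have hw' : w = [] := by simpa [RegularExpression.matches'_epsilon, Language.mem_one] using hw
      subst hw'
      exact ⟨1, rfl, 1, InXi.nil, rfl⟩
  | char a =>
      have hw' : w = [a] := by rw [RegularExpression.matches'_char] at hw; exact hw
      subst hw'
      refine ⟨RegularExpression.char a, rfl, wordExpr [a], InXi.base [a] (by simp), ?_⟩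
      show (RegularExpression.char a).matches' = (RegularExpression.char a * 1).matches'
      rw [RegularExpression.matches'_mul, RegularExpression.matches'_epsilon, mul_one]
  | comp hUF1 hUF2 ih1 ih2 =>
      rw [show ∀ (P Q : RegularExpression α), P * Q = P.comp Q from fun _ _ => rfl] at hw
      rw [RegularExpression.matches'] at hw
      obtain ⟨w1, hw1, w2, hw2, rfl⟩ := hw
      obtain ⟨r1, hr1κ, r1', hr1x, hr1l⟩ := ih1 w1 hw1
      obtain ⟨r2, hr2κ, r2', hr2x, hr2l⟩ := ih2 w2 hw2
      refine ⟨r1 * r2, ⟨r1, hr1κ, r2, hr2κ, rfl⟩, ?_⟩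
      by_cases h1 : w1 = []
      · subst h1
        have := inXi_nil_eq hr1x
        subst this
        rw [RegularExpression.matches'_epsilon] at hr1l
        by_cases h2 : w2 = []
        · subst h2
          have := inXi_nil_eq hr2x
          subst this
          rw [RegularExpression.matches'_epsilon] at hr2l
          exact ⟨1, InXi.nil, by
            rw [RegularExpression.matches'_mul, hr1l, hr2l, one_mul,
              RegularExpression.matches'_epsilon]⟩
        · exact ⟨r2', by simpa using hr2x, by
            rw [RegularExpression.matches'_mul, hr1l, one_mul, hr2l]⟩
      · by_cases h2 : w2 = []
        · subst h2
          have := inXi_nil_eq hr2x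
          subst this
          rw [RegularExpression.matches'_epsilon] at hr2l
          exact ⟨r1', by simpa using hr1x, by
            rw [RegularExpression.matches'_mul, hr2l, mul_one, hr1l]⟩
        · exact ⟨r1' * r2', InXi.comp h1 h2 hr1x hr2x, by
            rw [RegularExpression.matches'_mul, RegularExpression.matches'_mul, hr1l, hr2l]⟩
  | @star e' hUF' ih =>
      rw [RegularExpression.matches'_star, Language.mem_kstar] at hw
      obtain ⟨L, rfl, hLmem⟩ := hw
      set L' : List (List α) := L.filter (fun x => !x.isEmpty) with hL'
      have hflat : L'.flatten = L.flatten := flatten_filter_ne_nil L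
      by_cases hL'nil : L' = []
      · -- the word is empty
        have hwnil : L.flatten = [] := by
          rw [← hflat, hL'nil]; rfl
        rw [hwnil]
        refine ⟨(bigUnion (∅ : Finset (RegularExpression α))).star,
          ⟨∅, by simp, rfl⟩, 1, InXi.nil, ?_⟩
        have hU0 : (bigUnion (∅ : Finset (RegularExpression α))).matches' = (0 : Language α) := by
          ext x
          simp only [mem_bigUnion_matches, Finset.notMem_empty, false_and, exists_false]
          rfl
        rw [RegularExpression.matches'_star, hU0, RegularExpression.matches'_epsilon, kstar_zero]
      · obtain ⟨S, hSκ, t, htx, ht1, htU, hUt⟩ := star_aux e' ih L' hL'nil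
          (fun wi hwi => ⟨by
            have := List.of_mem_filter hwi
            simpa using this, hLmem wi (List.mem_of_mem_filter hwi)⟩)
        have hstar : ((bigUnion S).matches')∗ = (t.matches')∗ :=
          le_antisymm (by simpa using kstar_mono hUt)
            (by
              calc (t.matches')∗ ≤ ((bigUnion S).matches')∗∗ := kstar_mono htU
                _ = _ := kstar_idem _)
        have hfne : L'.flatten ≠ [] :=
          flatten_ne_nil' hL'nil (fun wi hwi => by
            have := List.of_mem_filter hwi; simpa using this)
        obtain ⟨t', ht'x, ht'l⟩ := inXi_star hfne htx
        refine ⟨(bigUnion S).star, ⟨S, hSκ, rfl⟩, t', by rwa [← hflat], ?_⟩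
        rw [RegularExpression.matches'_star, ht'l, hstar]
end

section
/- Let G be a context-free language and R a regular language with G ∩ R = ∅, and fix a star-contraction κ(R). Then for every word w ∈ R there exists e' ∈ κ(R) such that L(e') ⊆ ξ_{Ḡ}(w), where ξ_{Ḡ}(w) is the union of the languages of all star-generalizations of w that are disjoint from G. -/
open Computability


/-- `xiSet G w` is ξ_{Ḡ}(w): the union of the languages of all star-generalizations
of `w` whose language is disjoint from `G`. -/
def xiSet {α : Type*} (G : Language α) (w : List α) : Language α :=
  {v | ∃ r : RegularExpression α, InXi w r ∧ (∀ u ∈ r.matches', u ∉ G) ∧ v ∈ r.matches'}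

open RegularExpression in
lemma mem_bigUnion {α : Type*} {E : Finset (RegularExpression α)} {x : List α} :
    x ∈ (bigUnion E).matches' ↔ ∃ e ∈ E, x ∈ e.matches' := by
  have key : ∀ l : List (RegularExpression α),
      x ∈ (l.foldr (· + ·) 0).matches' ↔ ∃ e ∈ l, x ∈ e.matches' := by
    intro l
    induction l with
    | nil => simp [matches'_zero]
    | cons a t ih =>
      simp only [List.foldr_cons, matches'_add, Language.mem_add, ih, List.mem_cons]
      constructor
      · rintro (h | ⟨e, he, hx⟩)
        · exact ⟨a, Or.inl rfl, h⟩
        · exact ⟨e, Or.inr he, hx⟩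
      · rintro ⟨e, (rfl | he), hx⟩
        · exact Or.inl hx
        · exact Or.inr ⟨e, he, hx⟩
  rw [bigUnion, key]
  simp [Finset.mem_toList]

open RegularExpression in
lemma starify {α : Type} {w : List α} {r : RegularExpression α} (h : InXi w r) (hw : w ≠ []) :
    ∃ s : RegularExpression α, InXi w s.star ∧ r.matches' ≤ s.star.matches' ∧
      s.star.matches' ≤ r.matches'∗ := by
  cases h with
  | nil => exact absurd rfl hw
  | base w h =>
    refine ⟨wordExpr w, InXi.baseStar w h, ?_, ?_⟩
    · rw [matches'_star]; exact le_kstar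
    · rw [matches'_star]
  | baseStar w h =>
    refine ⟨wordExpr w, InXi.baseStar w h, le_refl _, ?_⟩
    rw [matches'_star]; exact le_kstar
  | comp h1 h2 i1 i2 =>
    refine ⟨_, InXi.compStar h1 h2 i1 i2, ?_, ?_⟩
    · rw [matches'_star]; exact le_kstar
    · rw [matches'_star]
  | compStar h1 h2 i1 i2 =>
    refine ⟨_, InXi.compStar h1 h2 i1 i2, le_refl _, ?_⟩
    rw [matches'_star]; exact le_kstar

open RegularExpression in
lemma chain {α : Type} (e : RegularExpression α) :
    ∀ ws : List (List α), ws ≠ [] →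
    (∀ u ∈ ws, u ≠ [] ∧ ∃ e' ∈ kappa e, ∃ r, InXi u r ∧ e'.matches' ≤ r.matches' ∧
      r.matches' ≤ e.matches') →
    ∃ E : Finset (RegularExpression α), ↑E ⊆ kappa e ∧
      ∃ s : RegularExpression α, InXi ws.flatten s.star ∧
        (bigUnion E).matches' ≤ s.star.matches' ∧ s.star.matches' ≤ e.matches'∗ := by
  intro ws
  induction ws with
  | nil => intro h; exact absurd rfl h
  | cons u t ih =>
    intro _ hall
    classical
    obtain ⟨hu, e', he', r, hr, hle, hub⟩ := hall u (by simp)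
    obtain ⟨s1, hs1In, hs1low, hs1up⟩ := starify hr hu
    by_cases ht : t = []
    · subst ht
      refine ⟨{e'}, by simpa using he', s1, by simpa using hs1In, ?_, ?_⟩
      · intro x hx
        replace hx := mem_bigUnion.mp hx
        obtain ⟨f, hf, hx⟩ := hx
        simp only [Finset.mem_singleton] at hf
        subst hf
        exact hs1low (hle hx)
      · exact hs1up.trans (kstar_mono hub)
    · obtain ⟨E, hE, s2, hs2In, hs2low, hs2up⟩ := ih ht (fun v hv => hall v (by simp [hv]))
      have htflat : t.flatten ≠ [] := by
        cases t with
        | nil => exact absurd rfl ht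
        | cons v t' =>
          obtain ⟨hv, -⟩ := hall v (by simp)
          simp only [List.flatten_cons]
          intro hcon
          exact hv (List.append_eq_nil_iff.mp hcon).1
      refine ⟨insert e' E, ?_, s1.star * s2.star, ?_, ?_, ?_⟩
      · rw [Finset.coe_insert]
        exact Set.insert_subset he' hE
      · simpa only [List.flatten_cons] using InXi.compStar hu htflat hs1In hs2In
      · intro x hx
        replace hx := mem_bigUnion.mp hx
        obtain ⟨f, hf, hx⟩ := hx
        rw [Finset.mem_insert] at hf
        rw [matches'_star, matches'_mul]
        rcases hf with rfl | hf
        · have hx1 : x ∈ s1.star.matches' := hs1low (hle hx)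
          have hnils : ([] : List α) ∈ s2.star.matches' := by
            rw [matches'_star]; exact Language.nil_mem_kstar _
          have hmm : x ∈ s1.star.matches' * s2.star.matches' := by
            simpa using Language.append_mem_mul hx1 hnils
          exact Language.mem_kstar.mpr ⟨[x], by simp, by simpa using hmm⟩
        · have hx2 : x ∈ s2.star.matches' := hs2low (mem_bigUnion.mpr ⟨f, hf, hx⟩)
          have hnils : ([] : List α) ∈ s1.star.matches' := by
            rw [matches'_star]; exact Language.nil_mem_kstar _
          have hmm : x ∈ s1.star.matches' * s2.star.matches' := by
            simpa using Language.append_mem_mul hnils hx2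
          exact Language.mem_kstar.mpr ⟨[x], by simp, by simpa using hmm⟩
      · rw [matches'_star, matches'_mul]
        have h1 : s1.star.matches' ≤ e.matches'∗ := hs1up.trans (kstar_mono hub)
        have hmul : s1.star.matches' * s2.star.matches' ≤ e.matches'∗ := by
          calc s1.star.matches' * s2.star.matches' ≤ e.matches'∗ * e.matches'∗ :=
                mul_le_mul' h1 hs2up
            _ = e.matches'∗ := kstar_mul_kstar _
        calc (s1.star.matches' * s2.star.matches')∗ ≤ (e.matches'∗)∗ := kstar_mono hmul
          _ = e.matches'∗ := kstar_idem _

open RegularExpression in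
lemma key_lemma {α : Type} {e : RegularExpression α} (hUF : UnionFree e) :
    ∀ w ∈ e.matches', ∃ e' ∈ kappa e, ∃ r, InXi w r ∧ e'.matches' ≤ r.matches' ∧
      r.matches' ≤ e.matches' ∧ (w = [] → e'.matches' ≤ 1) := by
  induction hUF with
  | epsilon =>
    intro w hw
    have hw' : w = [] := by
      rw [matches'_epsilon, Language.mem_one] at hw
      exact hw
    subst hw'
    refine ⟨1, by simp [kappa, one_def], 1, InXi.nil, le_refl _, le_refl _, fun _ => ?_⟩
    rw [matches'_epsilon]
  | char a =>
    intro w hw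
    rw [matches'_char] at hw; replace hw : w = [a] := hw
    subst hw
    have hL : (wordExpr [a] : RegularExpression α).matches' = (char a).matches' := by
      show (char a * 1).matches' = _
      rw [matches'_mul, matches'_epsilon, mul_one]
    refine ⟨char a, by simp [kappa], wordExpr [a], InXi.base [a] (by simp), ?_, ?_, ?_⟩
    · rw [hL]
    · rw [hL]
    · intro h; simp at h
  | @comp e1 e2 h1 h2 ih1 ih2 =>
    intro w hw
    rw [matches'_mul] at hw
    obtain ⟨w1, hw1, w2, hw2, rfl⟩ := Language.mem_mul.mp hw
    obtain ⟨e1', he1', r1, hr1, hle1, hub1, hnil1⟩ := ih1 w1 hw1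
    obtain ⟨e2', he2', r2, hr2, hle2, hub2, hnil2⟩ := ih2 w2 hw2
    have hk : e1' * e2' ∈ kappa (e1 * e2) := by
      show e1' * e2' ∈ kappa (RegularExpression.comp e1 e2)
      rw [kappa]
      exact ⟨e1', he1', e2', he2', rfl⟩
    by_cases hn1 : w1 = []
    · by_cases hn2 : w2 = []
      · subst hn1; subst hn2
        refine ⟨e1' * e2', hk, 1, InXi.nil, ?_, ?_, fun _ => ?_⟩
        · rw [matches'_mul, matches'_epsilon]
          calc e1'.matches' * e2'.matches' ≤ 1 * 1 := mul_le_mul' (hnil1 rfl) (hnil2 rfl)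
            _ = 1 := one_mul 1
        · rw [matches'_epsilon, matches'_mul]
          intro x hx
          replace hx := (Language.mem_one x).mp hx
          subst hx
          exact Language.append_mem_mul hw1 hw2
        · rw [matches'_mul]
          calc e1'.matches' * e2'.matches' ≤ 1 * 1 := mul_le_mul' (hnil1 rfl) (hnil2 rfl)
            _ = 1 := one_mul 1
      · subst hn1
        refine ⟨e1' * e2', hk, r2, hr2, ?_, ?_, fun h => absurd h hn2⟩
        · rw [matches'_mul]
          calc e1'.matches' * e2'.matches' ≤ 1 * r2.matches' :=
                mul_le_mul' (hnil1 rfl) hle2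
            _ = r2.matches' := one_mul _
        · rw [matches'_mul]
          intro x hx
          exact Language.append_mem_mul hw1 (hub2 hx)
    · by_cases hn2 : w2 = []
      · subst hn2
        refine ⟨e1' * e2', hk, r1, by simpa using hr1, ?_, ?_, ?_⟩
        · rw [matches'_mul]
          calc e1'.matches' * e2'.matches' ≤ r1.matches' * 1 :=
                mul_le_mul' hle1 (hnil2 rfl)
            _ = r1.matches' := mul_one _
        · rw [matches'_mul]
          intro x hx
          have := Language.append_mem_mul (hub1 hx) hw2
          simp at this; exact this
        · intro h; simp at h; exact absurd h hn1
      · refine ⟨e1' * e2', hk, r1 * r2, InXi.comp hn1 hn2 hr1 hr2, ?_, ?_, fun h => ?_⟩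
        · rw [matches'_mul, matches'_mul]
          exact mul_le_mul' hle1 hle2
        · rw [matches'_mul, matches'_mul]
          exact mul_le_mul' hub1 hub2
        · rw [List.append_eq_nil_iff] at h
          exact absurd h.1 hn1
  | @star e he ih =>
    intro w hw
    rw [matches'_star] at hw
    by_cases hwn : w = []
    · subst hwn
      have hk : (bigUnion (∅ : Finset (RegularExpression α))).star ∈ kappa e.star := by
        rw [kappa]
        exact ⟨∅, by simp, rfl⟩
      have hBU : (bigUnion (∅ : Finset (RegularExpression α))).matches' = 0 := by
        ext x
        rw [mem_bigUnion]
        simp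
      refine ⟨_, hk, 1, InXi.nil, ?_, ?_, fun _ => ?_⟩
      · rw [matches'_star, hBU, kstar_zero, matches'_epsilon]
      · rw [matches'_epsilon, matches'_star]
        exact one_le_kstar
      · rw [matches'_star, hBU, kstar_zero]
    · obtain ⟨S, hS, hSmem⟩ := Language.mem_kstar_iff_exists_nonempty.mp hw
      have hSne : S ≠ [] := by
        rintro rfl
        exact hwn (by simpa using hS)
      obtain ⟨E, hE, s, hIn, hlow, hup⟩ := chain e S hSne (fun u hu => by
        obtain ⟨e', he', r, hr, ha, hb, -⟩ := ih u (hSmem u hu).1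
        exact ⟨(hSmem u hu).2, e', he', r, hr, ha, hb⟩)
      have hk : (bigUnion E).star ∈ kappa e.star := by
        rw [kappa]
        exact ⟨E, hE, rfl⟩
      refine ⟨(bigUnion E).star, hk, s.star, ?_, ?_, ?_, fun h => absurd h hwn⟩
      · rw [hS]; exact hIn
      · rw [matches'_star]
        have := kstar_mono hlow
        calc (bigUnion E).matches'∗ ≤ (s.star.matches')∗ := this
          _ = (s.matches'∗)∗ := by rw [matches'_star]
          _ = s.matches'∗ := kstar_idem _
          _ = s.star.matches' := (matches'_star s).symm
      · rw [RegularExpression.matches'_star]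
        exact hup

/-- Let `G` be context-free and `R` regular (given by a fixed union-free decomposition
`es`, so `κ(R) = ⋃ e ∈ es, κ(e)`) with `G ∩ R = ∅`. Then for every word `w ∈ R` there
is some `e' ∈ κ(R)` with `L(e') ⊆ ξ_{Ḡ}(w)`. -/
theorem kappa_elem_subset_xiSet {α : Type} (G : Language α) (hG : G.IsContextFree)
    (es : List (RegularExpression α)) (hUF : ∀ e ∈ es, UnionFree e)
    (R : Language α) (hdec : R = {w | ∃ e ∈ es, w ∈ e.matches'})
    (hdisj : G ⊓ R = ⊥) (w : List α) (hw : w ∈ R) :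
    ∃ e' : RegularExpression α, (∃ e ∈ es, e' ∈ kappa e) ∧
      e'.matches' ≤ xiSet G w := by
  rw [hdec] at hw
  obtain ⟨e, he, hwe⟩ := hw
  obtain ⟨e', he', r, hr, hle, hub, -⟩ := key_lemma (hUF e he) w hwe
  refine ⟨e', ⟨e, he, he'⟩, fun v hv => ?_⟩
  refine ⟨r, hr, fun u hu hG => ?_, hle hv⟩
  have huR : u ∈ R := by
    rw [hdec]
    exact ⟨e, he, hub hu⟩
  have : u ∈ (G ⊓ R : Language α) := ⟨hG, huR⟩
  rw [hdisj] at this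
  exact this
end

section
/- Let L and L' be regularly separable context-free languages with separating regular language S, and let R_L⁰ ⊇ L and R_{L'}⁰ ⊇ L' be initial regular approximations. Consider the refinement process that, at each step with a word w in the current intersection R_Lⁱ ∩ R_{L'}ⁱ, replaces R_{L'}ⁱ by R_{L'}ⁱ \ ξ_{\overline{L'}}(w) if w ∈ S (and symmetrically replaces R_Lⁱ by R_Lⁱ \ ξ_{\overline{L}}(w) if w ∈ complement(S)). Then this process reaches an empty intersection R_Lⁿ ∩ R_{L'}ⁿ = ∅ after finitely many steps. -/
open scoped Computability

set_option linter.unusedSectionVars false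
set_option linter.unusedVariables false
set_option maxHeartbeats 1000000


theorem wordExpr_matches' {α : Type*} (w : List α) : (wordExpr w).matches' = {w} := by
  induction w with
  | nil =>
    ext x
    simp only [wordExpr, RegularExpression.matches'_epsilon, Language.mem_one,
      Set.mem_singleton_iff]
    exact Iff.rfl
  | cons a w ih =>
    ext x
    simp only [wordExpr, RegularExpression.matches'_mul, RegularExpression.matches'_char, ih,
      Language.mem_mul, Set.mem_singleton_iff]
    constructor
    · rintro ⟨u, hu, v, hv, rfl⟩
      change u = [a] at hu; change v = w at hv
      rw [hu, hv]
      rfl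
    · rintro rfl
      exact ⟨[a], rfl, w, rfl, rfl⟩

theorem kstar_mul_eq_sup {α : Type*} (c d : Language α) (hc : 1 ≤ c) (hd : 1 ≤ d) :
    (c * d)∗ = (c ⊔ d)∗ := by
  apply le_antisymm
  · have h1 : c * d ≤ (c ⊔ d)∗ := by
      calc c * d ≤ (c ⊔ d)∗ * (c ⊔ d)∗ :=
            mul_le_mul' (le_sup_left.trans le_kstar) (le_sup_right.trans le_kstar)
        _ = (c ⊔ d)∗ := kstar_mul_kstar _
    calc (c * d)∗ ≤ ((c ⊔ d)∗)∗ := kstar_mono h1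
      _ = (c ⊔ d)∗ := kstar_idem _
  · apply kstar_mono
    apply sup_le
    · calc c = c * 1 := (mul_one c).symm
        _ ≤ c * d := mul_le_mul' le_rfl hd
    · calc d = 1 * d := (one_mul d).symm
        _ ≤ c * d := mul_le_mul' hc le_rfl

theorem kstar_sup_kstar_eq {α : Type*} (x y : Language α) : (x ⊔ y∗)∗ = (x ⊔ y)∗ := by
  apply le_antisymm
  · have h : x ⊔ y∗ ≤ (x ⊔ y)∗ :=
      sup_le (le_sup_left.trans le_kstar) (kstar_mono le_sup_right)
    calc (x ⊔ y∗)∗ ≤ ((x ⊔ y)∗)∗ := kstar_mono h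
      _ = _ := kstar_idem _
  · exact kstar_mono (sup_le_sup_left le_kstar x)

theorem mem_of_inXi {α : Type*} : ∀ {w : List α} {r : RegularExpression α},
    InXi w r → w ∈ r.matches' := by
  intro w r h
  induction h with
  | nil => exact Language.nil_mem_one
  | base w h => rw [wordExpr_matches']; rfl
  | baseStar w h =>
    rw [RegularExpression.matches'_star, wordExpr_matches']
    exact Language.mem_kstar.2 ⟨[w], by simp, by intro y hy; simp at hy; rw [hy]; rfl⟩
  | comp h1 h2 _ _ ih1 ih2 =>
    rw [RegularExpression.matches'_mul]
    exact Language.append_mem_mul ih1 ih2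
  | @compStar w1 w2 e1 e2 h1 h2 _ _ ih1 ih2 =>
    rw [RegularExpression.matches'_star, RegularExpression.matches'_mul]
    exact Language.mem_kstar.2 ⟨[w1 ++ w2], by simp, by
      intro y hy; simp at hy; rw [hy]; exact Language.append_mem_mul ih1 ih2⟩

section CanDef

variable {α : Type} {Q : Type} [DecidableEq Q]

/-- Positions `j` (1 ≤ j ≤ |w|) such that the run from `p` on `w` returns to `p`. -/
def occSet (M : DFA α Q) (p : Q) (w : List α) : Set ℕ :=
  {j | 1 ≤ j ∧ j ≤ w.length ∧ M.evalFrom p (w.take j) = p}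

theorem occSet_bddAbove (M : DFA α Q) (p : Q) (w : List α) : BddAbove (occSet M p w) :=
  ⟨w.length, fun _ hx => hx.2.1⟩

noncomputable def lastOcc (M : DFA α Q) (p : Q) (w : List α) : ℕ :=
  sSup (occSet M p w)

open scoped Classical in
noncomputable def firstOcc (M : DFA α Q) (p : Q) (w : List α) : ℕ :=
  if (occSet M p w).Nonempty then sInf (occSet M p w) else w.length

theorem lastOcc_mem {M : DFA α Q} {p : Q} {w : List α} (h : (occSet M p w).Nonempty) :
    lastOcc M p w ∈ occSet M p w :=
  Nat.sSup_mem h (occSet_bddAbove M p w)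

theorem le_lastOcc {M : DFA α Q} {p : Q} {w : List α} {i : ℕ} (h : i ∈ occSet M p w) :
    i ≤ lastOcc M p w :=
  le_csSup (occSet_bddAbove M p w) h

theorem firstOcc_mem {M : DFA α Q} {p : Q} {w : List α} (h : (occSet M p w).Nonempty) :
    firstOcc M p w ∈ occSet M p w := by
  rw [firstOcc, if_pos h]
  exact Nat.sInf_mem h

theorem firstOcc_le {M : DFA α Q} {p : Q} {w : List α} {i : ℕ} (h : i ∈ occSet M p w) :
    firstOcc M p w ≤ i := by
  rw [firstOcc, if_pos ⟨i, h⟩]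
  exact Nat.sInf_le h

theorem mem_occSet {M : DFA α Q} {p : Q} {w : List α} {j : ℕ} :
    j ∈ occSet M p w ↔ 1 ≤ j ∧ j ≤ w.length ∧ M.evalFrom p (w.take j) = p :=
  Iff.rfl

theorem firstOcc_pos {M : DFA α Q} {p : Q} {w : List α} (hw : w ≠ []) :
    1 ≤ firstOcc M p w := by
  rw [firstOcc]
  split
  · exact (mem_occSet.1 (Nat.sInf_mem (by assumption))).1
  · exact Nat.one_le_iff_ne_zero.2 (by simpa using hw)

theorem firstOcc_le_length {M : DFA α Q} {p : Q} (w : List α) :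
    firstOcc M p w ≤ w.length := by
  rw [firstOcc]
  split
  · exact (mem_occSet.1 (Nat.sInf_mem (by assumption))).2.1
  · exact le_rfl

open scoped Classical in
/-- The canonical star-generalization. `can M false T p w` is the main function;
`can M true T p B` handles a loop `B` at `p` producing an expression whose language
contains the empty word. `T` is the set of states that are still allowed to repeat. -/
noncomputable def can (M : DFA α Q) : Bool → Finset Q → Q → List α → RegularExpression α
  | false, _, _, [] => 1
  | false, T, p, a :: w' =>
    if h : p ∈ T ∧ (occSet M p (a :: w')).Nonempty then
      if (a :: w').drop (lastOcc M p (a :: w')) = [] then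
        can M true (T.erase p) p ((a :: w').take (lastOcc M p (a :: w')))
      else
        can M true (T.erase p) p ((a :: w').take (lastOcc M p (a :: w'))) *
          can M false (T.erase p) p ((a :: w').drop (lastOcc M p (a :: w')))
    else if w' = [] then wordExpr [a]
    else wordExpr [a] * can M false (T.erase p) (M.step p a) w'
  | true, _, _, [] => 1
  | true, T, p, a :: w' =>
    if (a :: w').drop (firstOcc M p (a :: w')) = [] then
      (if firstOcc M p (a :: w') = 1 then (wordExpr [a]).star
       else (wordExpr [a] *
         can M false T (M.step p a) (w'.take (firstOcc M p (a :: w') - 1))).star)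
    else
      ((if firstOcc M p (a :: w') = 1 then (wordExpr [a]).star
        else (wordExpr [a] *
          can M false T (M.step p a) (w'.take (firstOcc M p (a :: w') - 1))).star) *
        can M true T p ((a :: w').drop (firstOcc M p (a :: w')))).star
  termination_by _ T _ w => (T.card, w.length)
  decreasing_by
  all_goals first
    | exact Prod.Lex.left _ _ (Finset.card_erase_lt_of_mem h.1)
    | exact Prod.Lex.right _ (lt_of_le_of_lt (List.length_take_le' _ _) (by simp))
    | exact Prod.Lex.right _ (by
        rw [List.length_drop]
        have h1 := firstOcc_pos (M := M) (p := p) (w := a :: w') (by simp)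
        have h2 := firstOcc_le_length (M := M) (p := p) (a :: w')
        simp only [List.length_cons] at *
        omega)
    | (rcases Decidable.em (p ∈ T) with hp | hp
       · exact Prod.Lex.left _ _ (Finset.card_erase_lt_of_mem hp)
       · rw [Finset.erase_eq_of_notMem hp]
         exact Prod.Lex.right _ (by simp))

end CanDef

section CanEq
variable {α : Type} {Q : Type} [DecidableEq Q] (M : DFA α Q)

theorem canR_nil (T : Finset Q) (p : Q) : can M false T p [] = 1 := by
  simp [can]

open scoped Classical in
theorem canR_cons (T : Finset Q) (p : Q) (a : α) (w' : List α) :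
    can M false T p (a :: w') =
      if p ∈ T ∧ (occSet M p (a :: w')).Nonempty then
        if (a :: w').drop (lastOcc M p (a :: w')) = [] then
          can M true (T.erase p) p ((a :: w').take (lastOcc M p (a :: w')))
        else
          can M true (T.erase p) p ((a :: w').take (lastOcc M p (a :: w'))) *
            can M false (T.erase p) p ((a :: w').drop (lastOcc M p (a :: w')))
      else if w' = [] then wordExpr [a]
      else wordExpr [a] * can M false (T.erase p) (M.step p a) w' := by
  rw [can, dite_eq_ite]

open scoped Classical in
theorem canB_cons (T : Finset Q) (p : Q) (a : α) (w' : List α) :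
    can M true T p (a :: w') =
      if (a :: w').drop (firstOcc M p (a :: w')) = [] then
        (if firstOcc M p (a :: w') = 1 then (wordExpr [a]).star
         else (wordExpr [a] *
           can M false T (M.step p a) (w'.take (firstOcc M p (a :: w') - 1))).star)
      else
        ((if firstOcc M p (a :: w') = 1 then (wordExpr [a]).star
          else (wordExpr [a] *
            can M false T (M.step p a) (w'.take (firstOcc M p (a :: w') - 1))).star) *
          can M true T p ((a :: w').drop (firstOcc M p (a :: w')))).star := by
  rw [can]

end CanEq

section CanProps
variable {α : Type} {Q : Type} [DecidableEq Q] (M : DFA α Q)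

theorem eval_star_loop (q : Q) {c : Language α} (h : ∀ u ∈ c, M.evalFrom q u = q) :
    ∀ v ∈ c∗, M.evalFrom q v = q := by
  intro v hv
  rw [Language.mem_kstar] at hv
  obtain ⟨L, rfl, hL⟩ := hv
  induction L with
  | nil => rfl
  | cons x L ih =>
    rw [List.flatten_cons, DFA.evalFrom_of_append, h x (hL x (by simp))]
    exact ih fun y hy => hL y (by simp [hy])

theorem occSet_eval {M : DFA α Q} {p : Q} {w : List α} {j : ℕ} (h : j ∈ occSet M p w) :
    M.evalFrom p (w.take j) = p := h.2.2

theorem length_mem_occSet {M : DFA α Q} {p : Q} {w : List α} (hw : w ≠ [])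
    (h : M.evalFrom p w = p) : w.length ∈ occSet M p w := by
  refine ⟨?_, le_rfl, ?_⟩
  · simpa [Nat.one_le_iff_ne_zero] using hw
  · rwa [List.take_of_length_le le_rfl]

/-- P1: the canonical expression is a star-generalization. -/
theorem inXi_can : ∀ (b : Bool) (T : Finset Q) (p : Q) (w : List α),
    InXi w (can M b T p w) := by
  intro b T p w
  induction b, T, p, w using can.induct M with
  | case1 T p => rw [canR_nil]; exact InXi.nil
  | case2 T p a w' h hdrop ih =>
    rw [canR_cons, if_pos h, if_pos hdrop]
    have htk : (a :: w').take (lastOcc M p (a :: w')) = a :: w' :=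
      List.take_of_length_le (by rw [← List.drop_eq_nil_iff]; exact hdrop)
    rw [htk] at ih ⊢
    exact ih
  | case3 T p a w' h hdrop ih1 ih2 =>
    rw [canR_cons, if_pos h, if_neg hdrop]
    have hB : (a :: w').take (lastOcc M p (a :: w')) ≠ [] := by
      have h1 : 1 ≤ lastOcc M p (a :: w') := (lastOcc_mem h.2).1
      simp only [ne_eq, List.take_eq_nil_iff, List.cons_ne_nil, or_false]
      omega
    have := InXi.comp hB hdrop ih1 ih2
    rwa [List.take_append_drop] at this
  | case4 T p a h =>
    rw [canR_cons, if_neg h, if_pos rfl]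
    exact InXi.base [a] (by simp)
  | case5 T p a w' h hw' ih =>
    rw [canR_cons, if_neg h, if_neg hw']
    exact InXi.comp (by simp) hw' (InXi.base [a] (by simp)) ih
  | case6 T p => rw [can]; exact InXi.nil
  | case7 T p a w' hdrop hk =>
    rw [canB_cons, if_pos hdrop, if_pos hk]
    have hw' : w' = [] := by
      rw [List.drop_eq_nil_iff, hk] at hdrop
      simpa using hdrop
    subst hw'
    exact InXi.baseStar [a] (by simp)
  | case8 T p a w' hdrop hk ih =>
    rw [canB_cons, if_pos hdrop, if_neg hk]
    have h1 : 1 ≤ firstOcc M p (a :: w') := firstOcc_pos (by simp)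
    have h2 : w'.length ≤ firstOcc M p (a :: w') - 1 := by
      rw [List.drop_eq_nil_iff] at hdrop
      simp only [List.length_cons] at hdrop
      omega
    have hw' : w' ≠ [] := by
      intro hw
      subst hw
      have := firstOcc_le_length (M := M) (p := p) ([a])
      simp only [List.length_cons, List.length_nil] at this
      omega
    have heq : w'.take (firstOcc M p (a :: w') - 1) = w' := List.take_of_length_le h2
    rw [heq] at ih ⊢
    have := InXi.compStar (by simp) hw' (InXi.base [a] (by simp)) ih
    rwa [List.singleton_append] at this
  | case9 T p a w' hdrop ih1 ih2 =>
    rw [canB_cons, if_neg hdrop]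
    have h1 : 1 ≤ firstOcc M p (a :: w') := firstOcc_pos (by simp)
    have hπ : InXi ((a :: w').take (firstOcc M p (a :: w')))
        (if firstOcc M p (a :: w') = 1 then (wordExpr [a]).star
         else (wordExpr [a] *
           can M false T (M.step p a) (w'.take (firstOcc M p (a :: w') - 1))).star) := by
      by_cases hk : firstOcc M p (a :: w') = 1
      · rw [if_pos hk, hk]
        exact InXi.baseStar [a] (by simp)
      · rw [if_neg hk]
        have hk2 : 2 ≤ firstOcc M p (a :: w') := by omega
        have hw' : w' ≠ [] := by
          intro hw
          subst hw
          have := firstOcc_le_length (M := M) (p := p) ([a])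
          simp only [List.length_cons, List.length_nil] at this
          omega
        have hπ'' : w'.take (firstOcc M p (a :: w') - 1) ≠ [] := by
          simp only [ne_eq, List.take_eq_nil_iff]
          push_neg
          constructor <;> [omega; simpa using hw']
        have := InXi.compStar (by simp) hπ'' (InXi.base [a] (by simp)) ih1
        rw [List.singleton_append] at this
        have htake : (a :: w').take (firstOcc M p (a :: w')) =
            a :: w'.take (firstOcc M p (a :: w') - 1) := by
          conv_lhs => rw [show firstOcc M p (a :: w') = (firstOcc M p (a :: w') - 1) + 1 by omega]
          rw [List.take_succ_cons]
        rwa [htake]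
    have hπne : (a :: w').take (firstOcc M p (a :: w')) ≠ [] := by
      simp only [ne_eq, List.take_eq_nil_iff, List.cons_ne_nil, or_false]
      omega
    have := InXi.compStar hπne hdrop hπ ih2
    rwa [List.take_append_drop] at this
end CanProps

section CanEval
variable {α : Type} {Q : Type} [DecidableEq Q] (M : DFA α Q)

theorem nil_mem_canB (T : Finset Q) (p : Q) (a : α) (w' : List α) :
    [] ∈ (can M true T p (a :: w')).matches' := by
  rw [canB_cons]
  split
  · split <;> (rw [RegularExpression.matches'_star]; exact Language.nil_mem_kstar _)
  · rw [RegularExpression.matches'_star]; exact Language.nil_mem_kstar _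

/-- P2: every word in the language of the canonical expression has the same state
transformation (from `p`) as the original word. -/
theorem can_eval : ∀ (b : Bool) (T : Finset Q) (p : Q) (w : List α),
    (b = true → M.evalFrom p w = p) →
    ∀ v ∈ (can M b T p w).matches', M.evalFrom p v = M.evalFrom p w := by
  intro b T p w
  induction b, T, p, w using can.induct M with
  | case1 T p =>
    intro _ v hv
    rw [canR_nil, RegularExpression.matches'_epsilon, Language.mem_one] at hv
    rw [hv]
  | case2 T p a w' h hdrop ih =>
    intro _ v hv
    rw [canR_cons, if_pos h, if_pos hdrop] at hv
    have htk : (a :: w').take (lastOcc M p (a :: w')) = a :: w' :=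
      List.take_of_length_le (by rw [← List.drop_eq_nil_iff]; exact hdrop)
    have hloop : M.evalFrom p (a :: w') = p := by
      have := occSet_eval (lastOcc_mem h.2)
      rwa [htk] at this
    rw [htk] at hv ih
    rw [hloop]
    rw [ih (fun _ => hloop) v hv, hloop]
  | case3 T p a w' h hdrop ih1 ih2 =>
    intro _ v hv
    rw [canR_cons, if_pos h, if_neg hdrop, RegularExpression.matches'_mul,
      Language.mem_mul] at hv
    obtain ⟨v1, hv1, v2, hv2, rfl⟩ := hv
    set j := lastOcc M p (a :: w') with hj
    have hloopB : M.evalFrom p ((a :: w').take j) = p := occSet_eval (lastOcc_mem h.2)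
    have h1 := ih1 (fun _ => hloopB) v1 hv1
    have h2 := ih2 (fun hf => by exact absurd hf (by simp)) v2 hv2
    rw [DFA.evalFrom_of_append, h1, hloopB, h2]
    conv_rhs => rw [← List.take_append_drop j (a :: w'), DFA.evalFrom_of_append, hloopB]
  | case4 T p a h =>
    intro _ v hv
    rw [canR_cons, if_neg h, if_pos rfl, wordExpr_matches'] at hv; change v = [a] at hv
    rw [hv]
  | case5 T p a w' h hw' ih =>
    intro _ v hv
    rw [canR_cons, if_neg h, if_neg hw', RegularExpression.matches'_mul,
      wordExpr_matches', Language.mem_mul] at hv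
    obtain ⟨v1, hv1, v2, hv2, rfl⟩ := hv
    change v1 = [a] at hv1
    subst hv1
    have h2 := ih (fun hf => by exact absurd hf (by simp)) v2 hv2
    show M.evalFrom p ([a] ++ v2) = _
    rw [DFA.evalFrom_of_append]
    show M.evalFrom (M.step p a) v2 = _
    rw [h2]
    rfl
  | case6 T p =>
    intro _ v hv
    rw [can, RegularExpression.matches'_epsilon, Language.mem_one] at hv
    rw [hv]
  | case7 T p a w' hdrop hk =>
    intro hB v hv
    have hw' : w' = [] := by
      rw [List.drop_eq_nil_iff, hk] at hdrop
      simpa using hdrop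
    subst hw'
    rw [canB_cons, if_pos hdrop, if_pos hk, RegularExpression.matches'_star,
      wordExpr_matches'] at hv
    have hl := hB rfl
    rw [hl]
    exact eval_star_loop M p (by
      intro u hu
      change u = [a] at hu
      rw [hu]; exact hl) v hv
  | case8 T p a w' hdrop hk ih =>
    intro hB v hv
    have hl := hB rfl
    rw [hl]
    have h1 : 1 ≤ firstOcc M p (a :: w') := firstOcc_pos (by simp)
    have h2 : w'.length ≤ firstOcc M p (a :: w') - 1 := by
      rw [List.drop_eq_nil_iff] at hdrop
      simp only [List.length_cons] at hdrop
      omega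
    have heq : w'.take (firstOcc M p (a :: w') - 1) = w' := List.take_of_length_le h2
    rw [canB_cons, if_pos hdrop, if_neg hk, RegularExpression.matches'_star,
      RegularExpression.matches'_mul, wordExpr_matches', heq] at hv
    rw [heq] at ih
    refine eval_star_loop M p ?_ v hv
    intro u hu
    rw [Language.mem_mul] at hu
    obtain ⟨u1, hu1, u2, hu2, rfl⟩ := hu
    change u1 = [a] at hu1
    subst hu1
    have := ih (fun hf => by exact absurd hf (by simp)) u2 hu2
    show M.evalFrom p ([a] ++ u2) = p
    rw [DFA.evalFrom_of_append]
    show M.evalFrom (M.step p a) u2 = p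
    rw [this]
    exact hl
  | case9 T p a w' hdrop ih1 ih2 =>
    intro hB v hv
    have hl := hB rfl
    rw [hl]
    set k := firstOcc M p (a :: w') with hkdef
    have h1 : 1 ≤ k := firstOcc_pos (by simp)
    have hkmem : k ∈ occSet M p (a :: w') :=
      firstOcc_mem ⟨(a :: w').length, length_mem_occSet (by simp) hl⟩
    have hloopπ : M.evalFrom p ((a :: w').take k) = p := occSet_eval hkmem
    have hloopB' : M.evalFrom p ((a :: w').drop k) = p := by
      conv_lhs at hl => rw [← List.take_append_drop k (a :: w')]
      rwa [DFA.evalFrom_of_append, hloopπ] at hl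
    rw [canB_cons, if_neg hdrop, RegularExpression.matches'_star,
      RegularExpression.matches'_mul] at hv
    refine eval_star_loop M p ?_ v hv
    intro u hu
    rw [Language.mem_mul] at hu
    obtain ⟨u1, hu1, u2, hu2, rfl⟩ := hu
    have hu2' : M.evalFrom p u2 = p := by
      have := ih2 (fun _ => hloopB') u2 hu2
      rw [this, hloopB']
    have hu1' : M.evalFrom p u1 = p := by
      by_cases hk1 : k = 1
      · rw [if_pos hk1, RegularExpression.matches'_star, wordExpr_matches'] at hu1
        have ha : M.evalFrom p [a] = p := by
          have := hloopπ
          rw [hk1] at this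
          simpa using this
        exact eval_star_loop M p (by
          intro x hx
          change x = [a] at hx
          rw [hx]; exact ha) u1 hu1
      · rw [if_neg hk1, RegularExpression.matches'_star, RegularExpression.matches'_mul,
          wordExpr_matches'] at hu1
        have htake : (a :: w').take k = a :: w'.take (k - 1) := by
          conv_lhs => rw [show k = (k - 1) + 1 by omega]
          rw [List.take_succ_cons]
        refine eval_star_loop M p ?_ u1 hu1
        intro x hx
        rw [Language.mem_mul] at hx
        obtain ⟨x1, hx1, x2, hx2, rfl⟩ := hx
        change x1 = [a] at hx1
        subst hx1
        have := ih1 (fun hf => by exact absurd hf (by simp)) x2 hx2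
        show M.evalFrom p ([a] ++ x2) = p
        rw [DFA.evalFrom_of_append]
        show M.evalFrom (M.step p a) x2 = p
        rw [this]
        have := hloopπ
        rw [htake] at this
        exact this
    rw [DFA.evalFrom_of_append, hu1', hu2']
end CanEval

section Families
variable {α : Type} {Q : Type} [DecidableEq Q]

/-- Invariant for the main function: all strictly internal states of the run lie in `T`. -/
def INVR (M : DFA α Q) (T : Finset Q) (p : Q) (w : List α) : Prop :=
  ∀ i, 1 ≤ i → i < w.length → M.evalFrom p (w.take i) ∈ T

/-- Invariant for the loop function: internal states lie in `insert p T`, and `w` loops at `p`. -/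
def INVB (M : DFA α Q) (T : Finset Q) (p : Q) (w : List α) : Prop :=
  (∀ i, 1 ≤ i → i < w.length → M.evalFrom p (w.take i) ∈ insert p T) ∧ M.evalFrom p w = p

variable (M : DFA α Q)

theorem eval_take_cons (p : Q) (a : α) (w' : List α) (i : ℕ) :
    M.evalFrom p ((a :: w').take (i + 1)) = M.evalFrom (M.step p a) (w'.take i) := by
  rw [List.take_succ_cons]
  rfl

/-- Block case: invariant for the loop part. -/
theorem invb_block {T : Finset Q} {p : Q} {w : List α} (hp : p ∈ T)
    (hinv : INVR M T p w) (hne : (occSet M p w).Nonempty) :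
    INVB M (T.erase p) p (w.take (lastOcc M p w)) := by
  have hj := lastOcc_mem hne
  constructor
  · intro i h1 h2
    rw [Finset.insert_erase hp]
    rw [List.length_take] at h2
    have hij : i < lastOcc M p w := lt_of_lt_of_le h2 (min_le_left _ _)
    have hiw : i < w.length := lt_of_lt_of_le h2 (min_le_right _ _)
    rw [List.take_take, min_eq_left hij.le]
    exact hinv i h1 hiw
  · exact hj.2.2

/-- Block case: invariant for the rest. -/
theorem invr_block_rest {T : Finset Q} {p : Q} {w : List α}
    (hinv : INVR M T p w) (hne : (occSet M p w).Nonempty) :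
    INVR M (T.erase p) p (w.drop (lastOcc M p w)) := by
  have hj := lastOcc_mem hne
  set j := lastOcc M p w with hjdef
  intro i h1 h2
  rw [List.length_drop] at h2
  have heval : M.evalFrom p ((w.drop j).take i) = M.evalFrom p (w.take (j + i)) := by
    rw [List.take_add, DFA.evalFrom_of_append, hj.2.2]
  have hmem : M.evalFrom p (w.take (j + i)) ∈ T := hinv (j + i) (by omega) (by omega)
  have hnep : M.evalFrom p (w.take (j + i)) ≠ p := by
    intro hc
    have : j + i ∈ occSet M p w := ⟨by omega, by omega, hc⟩
    have := le_lastOcc this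
    omega
  rw [heval]
  exact Finset.mem_erase.2 ⟨hnep, hmem⟩

/-- Letter case, `p ∈ T` and no reoccurrence. -/
theorem invr_letter_noocc {T : Finset Q} {p : Q} {a : α} {w' : List α}
    (hinv : INVR M T p (a :: w')) (hocc : ¬(occSet M p (a :: w')).Nonempty) :
    INVR M (T.erase p) (M.step p a) w' := by
  intro i h1 h2
  rw [← eval_take_cons]
  refine Finset.mem_erase.2 ⟨?_, hinv (i+1) (by omega) (by simpa using h2)⟩
  intro hc
  exact hocc ⟨i + 1, by omega, by simp; omega, hc⟩

/-- Letter case, `p ∉ T`. -/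
theorem invr_letter_notmem {T : Finset Q} {p : Q} {a : α} {w' : List α}
    (hinv : INVR M T p (a :: w')) :
    INVR M T (M.step p a) w' := by
  intro i h1 h2
  rw [← eval_take_cons]
  exact hinv (i+1) (by omega) (by simpa using h2)

theorem entry_mem {T : Finset Q} {p : Q} {a : α} {w' : List α}
    (hinv : INVR M T p (a :: w')) (hw' : w' ≠ []) : M.step p a ∈ T := by
  have := hinv 1 le_rfl (by simpa using List.length_pos_of_ne_nil hw')
  simpa using this

/-- Piece case: invariant for the interior of the first piece of a loop. -/
theorem invr_piece {T : Finset Q} {p : Q} {a : α} {w' : List α}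
    (hinv : INVB M T p (a :: w')) (hk : firstOcc M p (a :: w') ≠ 1) :
    INVR M T (M.step p a) (w'.take (firstOcc M p (a :: w') - 1)) ∧ M.step p a ∈ T := by
  set k := firstOcc M p (a :: w') with hkdef
  have hkpos : 1 ≤ k := firstOcc_pos (by simp)
  have hk2 : 2 ≤ k := by omega
  have hkle : k ≤ (a :: w').length := firstOcc_le_length _
  have hint : ∀ i, 1 ≤ i → i < k → M.evalFrom p ((a :: w').take i) ∈ T := by
    intro i h1 h2
    have hiw : i < (a :: w').length := by omega
    have hmem : M.evalFrom p ((a :: w').take i) ∈ insert p T := hinv.1 i h1 hiw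
    have hne : M.evalFrom p ((a :: w').take i) ≠ p := by
      intro hc
      have : i ∈ occSet M p (a :: w') := ⟨h1, by omega, hc⟩
      have := firstOcc_le this
      omega
    rcases Finset.mem_insert.1 hmem with h | h
    · exact absurd h hne
    · exact h
  constructor
  · intro i h1 h2
    rw [List.length_take] at h2
    have hik : i < k - 1 := lt_of_lt_of_le h2 (min_le_left _ _)
    have hiw : i < w'.length := lt_of_lt_of_le h2 (min_le_right _ _)
    rw [List.take_take, min_eq_left hik.le, ← eval_take_cons]
    exact hint (i + 1) (by omega) (by omega)
  · have := hint 1 le_rfl (by omega)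
    simpa using this

/-- Loop case: invariant for the remaining loop. -/
theorem invb_rest {T : Finset Q} {p : Q} {w : List α} (hw : w ≠ [])
    (hinv : INVB M T p w) :
    INVB M T p (w.drop (firstOcc M p w)) := by
  set k := firstOcc M p w with hkdef
  have hkmem : k ∈ occSet M p w := firstOcc_mem ⟨w.length, length_mem_occSet hw hinv.2⟩
  have hloopπ : M.evalFrom p (w.take k) = p := hkmem.2.2
  constructor
  · intro i h1 h2
    rw [List.length_drop] at h2
    have heval : M.evalFrom p ((w.drop k).take i) = M.evalFrom p (w.take (k + i)) := by
      rw [List.take_add, DFA.evalFrom_of_append, hloopπ]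
    rw [heval]
    exact hinv.1 (k + i) (by omega) (by omega)
  · have := hinv.2
    conv_lhs at this => rw [← List.take_append_drop k w]
    rwa [DFA.evalFrom_of_append, hloopπ] at this

end Families

section Master
variable {α : Type} {Q : Type} [DecidableEq Q] (M : DFA α Q)

/-- Languages of canonical expressions on (invariant-satisfying) inputs. -/
def FF (T : Finset Q) : Set (Language α) :=
  {X | ∃ p w, INVR M T p w ∧ X = (can M false T p w).matches'}

/-- As `FF`, but with entry state in `T` (or empty word). -/
def CoreF (T : Finset Q) : Set (Language α) :=
  {X | ∃ p w, INVR M T p w ∧ (w = [] ∨ p ∈ T) ∧ X = (can M false T p w).matches'}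

/-- Languages of canonical loop expressions. -/
def BF (T : Finset Q) : Set (Language α) :=
  {X | ∃ p w, INVB M T p w ∧ w ≠ [] ∧ X = (can M true T p w).matches'}

/-- Possible languages of piece expressions. -/
def PieceF (T : Finset Q) : Set (Language α) :=
  (Set.range fun a : α => ({[a]} : Language α)∗) ∪
    (⋃ a : α, (fun X => (({[a]} : Language α) * X)∗) '' CoreF M T)

theorem Epi_one_le (T : Finset Q) (p : Q) (a : α) (w' : List α) :
    1 ≤ (if firstOcc M p (a :: w') = 1 then (wordExpr [a]).star
       else (wordExpr [a] *
         can M false T (M.step p a) (w'.take (firstOcc M p (a :: w') - 1))).star).matches' := by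
  split <;>
    (rw [RegularExpression.matches'_star]
     exact one_le_kstar)

theorem Epi_mem_pieceF (T : Finset Q) (p : Q) (a : α) (w' : List α)
    (hinv : INVB M T p (a :: w')) :
    (if firstOcc M p (a :: w') = 1 then (wordExpr [a]).star
       else (wordExpr [a] *
         can M false T (M.step p a) (w'.take (firstOcc M p (a :: w') - 1))).star).matches'
      ∈ PieceF M T := by
  split
  · rw [RegularExpression.matches'_star, wordExpr_matches']
    exact Or.inl ⟨a, rfl⟩
  · rw [RegularExpression.matches'_star, RegularExpression.matches'_mul, wordExpr_matches']
    refine Or.inr (Set.mem_iUnion.2 ⟨a, Set.mem_image_of_mem _ ?_⟩)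
    have hp := invr_piece M hinv (by assumption)
    exact ⟨M.step p a, _, hp.1, Or.inr hp.2, rfl⟩

theorem canB_lang (T : Finset Q) : ∀ (n : ℕ) (B : List α), B.length ≤ n → ∀ p : Q,
    INVB M T p B → B ≠ [] →
    ∃ U : Set (Language α), U ⊆ PieceF M T ∧ U.Finite ∧
      (can M true T p B).matches' = (sSup U)∗ := by
  intro n
  induction n with
  | zero => intro B hB p _ hne; simp [List.length_eq_zero_iff] at hB; exact absurd hB hne
  | succ n IH =>
    rintro (_ | ⟨a, w'⟩) hB p hinv hne
    · exact absurd rfl hne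
    · set k := firstOcc M p (a :: w') with hkdef
      have hkpos : 1 ≤ k := firstOcc_pos (by simp)
      have hEone := Epi_one_le M T p a w'
      have hEmem := Epi_mem_pieceF M T p a w' hinv
      rw [canB_cons]
      by_cases hd : (a :: w').drop k = []
      · rw [if_pos hd]
        refine ⟨{(if firstOcc M p (a :: w') = 1 then (wordExpr [a]).star
          else (wordExpr [a] *
            can M false T (M.step p a) (w'.take (firstOcc M p (a :: w') - 1))).star).matches'},
          by simpa using hEmem, Set.finite_singleton _, ?_⟩
        rw [sSup_singleton]
        split
        · rw [RegularExpression.matches'_star, kstar_idem]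
        · rw [RegularExpression.matches'_star, kstar_idem]
      · rw [if_neg hd]
        have hB'len : ((a :: w').drop k).length ≤ n := by
          rw [List.length_drop]
          simp only [List.length_cons] at hB ⊢
          omega
        obtain ⟨U', hU'sub, hU'fin, hU'eq⟩ :=
          IH ((a :: w').drop k) hB'len p (invb_rest M (by simp) hinv) hd
        refine ⟨insert (if firstOcc M p (a :: w') = 1 then (wordExpr [a]).star
          else (wordExpr [a] *
            can M false T (M.step p a) (w'.take (firstOcc M p (a :: w') - 1))).star).matches' U',
          Set.insert_subset hEmem hU'sub, hU'fin.insert _, ?_⟩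
        rw [RegularExpression.matches'_star, RegularExpression.matches'_mul, hU'eq]
        rw [kstar_mul_eq_sup _ _ hEone one_le_kstar, kstar_sup_kstar_eq, sSup_insert]

theorem families_finite [Fintype α] (T : Finset Q) :
    (CoreF M T).Finite ∧ (BF M T).Finite ∧ (FF M T).Finite := by
  induction T using Finset.strongInduction with
  | _ T IH =>
  have hCore : (CoreF M T).Finite := by
    have hsub : CoreF M T ⊆
        (({1} : Set (Language α)) ∪ (Set.range fun a : α => ({[a]} : Language α))) ∪
        ((⋃ p ∈ T, BF M (T.erase p)) ∪
          (⋃ p ∈ T, Set.image2 (· * ·) (BF M (T.erase p)) (FF M (T.erase p))) ∪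
          (⋃ p ∈ T, ⋃ a : α, (fun X => ({[a]} : Language α) * X) '' FF M (T.erase p))) := by
      rintro X ⟨p, w, hinv, hcore, rfl⟩
      match w with
      | [] =>
        left; left
        rw [canR_nil, RegularExpression.matches'_epsilon]
        rfl
      | a :: w' =>
        have hp : p ∈ T := hcore.resolve_left (by simp)
        rw [canR_cons]
        by_cases h : p ∈ T ∧ (occSet M p (a :: w')).Nonempty
        · rw [if_pos h]
          have hBne : (a :: w').take (lastOcc M p (a :: w')) ≠ [] := by
            have h1 : 1 ≤ lastOcc M p (a :: w') := (lastOcc_mem h.2).1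
            simp only [ne_eq, List.take_eq_nil_iff, List.cons_ne_nil, or_false]
            omega
          by_cases hd : (a :: w').drop (lastOcc M p (a :: w')) = []
          · rw [if_pos hd]
            right; left; left
            refine Set.mem_biUnion hp ⟨p, _, invb_block M hp hinv h.2, hBne, rfl⟩
          · rw [if_neg hd, RegularExpression.matches'_mul]
            right; left; right
            refine Set.mem_biUnion hp ?_
            exact Set.mem_image2_of_mem
              ⟨p, _, invb_block M hp hinv h.2, hBne, rfl⟩
              ⟨p, _, invr_block_rest M hinv h.2, rfl⟩
        · rw [if_neg h]
          have hocc : ¬(occSet M p (a :: w')).Nonempty := fun hocc => h ⟨hp, hocc⟩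
          by_cases hw' : w' = []
          · subst hw'
            rw [if_pos rfl, wordExpr_matches']
            left; right
            exact ⟨a, rfl⟩
          · rw [if_neg hw', RegularExpression.matches'_mul, wordExpr_matches']
            right; right
            refine Set.mem_biUnion hp (Set.mem_iUnion.2 ⟨a, ?_⟩)
            exact Set.mem_image_of_mem _ ⟨M.step p a, w', invr_letter_noocc M hinv hocc, rfl⟩
    refine Set.Finite.subset ?_ hsub
    refine Set.Finite.union (Set.Finite.union (Set.finite_singleton _) (Set.finite_range _)) ?_
    refine Set.Finite.union (Set.Finite.union ?_ ?_) ?_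
    · exact Set.Finite.biUnion T.finite_toSet fun p hp => (IH _ (Finset.erase_ssubset hp)).2.1
    · exact Set.Finite.biUnion T.finite_toSet fun p hp =>
        Set.Finite.image2 _ (IH _ (Finset.erase_ssubset hp)).2.1
          (IH _ (Finset.erase_ssubset hp)).2.2
    · exact Set.Finite.biUnion T.finite_toSet fun p hp =>
        Set.finite_iUnion fun a => Set.Finite.image _ (IH _ (Finset.erase_ssubset hp)).2.2
  have hPiece : (PieceF M T).Finite := by
    refine Set.Finite.union (Set.finite_range _) (Set.finite_iUnion fun a => hCore.image _)
  have hBF : (BF M T).Finite := by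
    have hsub : BF M T ⊆ (fun U => (sSup U)∗) '' {U | U ⊆ PieceF M T} := by
      rintro X ⟨p, w, hinv, hne, rfl⟩
      obtain ⟨U, hUsub, _, hUeq⟩ := canB_lang M T w.length w le_rfl p hinv hne
      exact ⟨U, hUsub, hUeq.symm⟩
    exact Set.Finite.subset (Set.Finite.image _ hPiece.finite_subsets) hsub
  have hFF : (FF M T).Finite := by
    have hsub : FF M T ⊆ CoreF M T ∪ (Set.range fun a : α => ({[a]} : Language α)) ∪
        (⋃ a : α, (fun X => ({[a]} : Language α) * X) '' CoreF M T) := by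
      rintro X ⟨p, w, hinv, rfl⟩
      by_cases hcore : w = [] ∨ p ∈ T
      · exact Or.inl (Or.inl ⟨p, w, hinv, hcore, rfl⟩)
      push_neg at hcore
      obtain ⟨hwne, hp⟩ := hcore
      match w with
      | [] => exact absurd rfl hwne
      | a :: w' =>
        rw [canR_cons, if_neg (fun hh => hp hh.1)]
        by_cases hw' : w' = []
        · subst hw'
          rw [if_pos rfl, wordExpr_matches']
          exact Or.inl (Or.inr ⟨a, rfl⟩)
        · rw [if_neg hw', RegularExpression.matches'_mul, wordExpr_matches',
            Finset.erase_eq_of_notMem hp]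
          refine Or.inr (Set.mem_iUnion.2 ⟨a, Set.mem_image_of_mem _ ?_⟩)
          exact ⟨M.step p a, w', invr_letter_notmem M hinv,
            Or.inr (entry_mem M hinv hw'), rfl⟩
    exact Set.Finite.subset ((hCore.union (Set.finite_range _)).union
      (Set.finite_iUnion fun a => hCore.image _)) hsub
  exact ⟨hCore, hBF, hFF⟩

theorem can_lang_finite [Fintype α] [Fintype Q] :
    (Set.range fun w : List α =>
      (can M false Finset.univ M.start w).matches').Finite := by
  refine Set.Finite.subset (families_finite M Finset.univ).2.2 ?_
  rintro X ⟨w, rfl⟩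
  exact ⟨M.start, w, fun i _ _ => Finset.mem_univ _, rfl⟩

end Master

/-- The key classifier: for a regular language `S` there are finitely many classes,
each of which is the language of a star-generalization of each of its members,
and each of which is `S`-homogeneous. -/
theorem exists_classifier {α : Type} [Fintype α] (S : Language α) (hS : S.IsRegular) :
    ∃ (C : Set (Language α)) (c : List α → Language α),
      C.Finite ∧ (∀ w, c w ∈ C) ∧ (∀ w, w ∈ c w) ∧
      (∀ w, ∃ r : RegularExpression α, InXi w r ∧ r.matches' = c w) ∧
      (∀ w v, v ∈ c w → (v ∈ S ↔ w ∈ S)) := by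
  obtain ⟨Q, fQ, M, hM⟩ := hS
  letI : DecidableEq Q := Classical.decEq Q
  refine ⟨_, fun w => (can M false Finset.univ M.start w).matches',
    can_lang_finite M, fun w => ⟨w, rfl⟩, ?_, ?_, ?_⟩
  · intro w
    exact mem_of_inXi (inXi_can M false Finset.univ M.start w)
  · intro w
    exact ⟨_, inXi_can M false Finset.univ M.start w, rfl⟩
  · intro w v hv
    have heval := can_eval M false Finset.univ M.start w
      (fun h => absurd h (by simp)) v hv
    rw [← hM, DFA.mem_accepts, DFA.mem_accepts]
    show M.evalFrom M.start v ∈ M.accept ↔ M.evalFrom M.start w ∈ M.accept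
    rw [heval]


/-- Completeness of refinement by maximum star-generalization: if `L` and `L'` are
context-free and regularly separated by the regular language `S`, then the refinement
process, which at step `i` with a word `w i` in the current intersection removes
`ξ_{\overline{L'}}(w i)` from `R2` if `w i ∈ S` (and symmetrically removes
`ξ_{\overline{L}}(w i)` from `R1` if `w i ∉ S`), reaches an empty intersection after
finitely many steps. -/
theorem refinement_terminates {α : Type} [Fintype α] (L L' S : Language α)
    (hL : L.IsContextFree) (hL' : L'.IsContextFree) (hS : S.IsRegular)
    (hLS : L ≤ S) (hL'S : L' ≤ Sᶜ)
    (R1 R2 : ℕ → Language α) (w : ℕ → List α)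
    (hinit1 : L ≤ R1 0) (hinit2 : L' ≤ R2 0)
    (hstep : ∀ i, R1 i ⊓ R2 i ≠ ⊥ →
      (w i ∈ R1 i ∧ w i ∈ R2 i) ∧
      (w i ∈ S → R2 (i + 1) = R2 i \ xiSet L' (w i) ∧ R1 (i + 1) = R1 i) ∧
      (w i ∉ S → R1 (i + 1) = R1 i \ xiSet L (w i) ∧ R2 (i + 1) = R2 i)) :
    ∃ n, R1 n ⊓ R2 n = ⊥ := by
  classical
  by_contra hcon
  push_neg at hcon
  obtain ⟨C, c, hCfin, hcC, hwc, hr, hsep⟩ := exists_classifier S hS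
  have hkey2 : ∀ i, w i ∈ S → ∀ v, c v = c (w i) → v ∈ xiSet L' (w i) := by
    intro i hwS v hcv
    obtain ⟨r, hir, hrq⟩ := hr (w i)
    refine ⟨r, hir, ?_, ?_⟩
    · intro u hu hLu
      rw [hrq] at hu
      have huS : u ∈ S := (hsep (w i) u hu).2 hwS
      exact hL'S hLu huS
    · rw [hrq, ← hcv]
      exact hwc v
  have hkey1 : ∀ i, w i ∉ S → ∀ v, c v = c (w i) → v ∈ xiSet L (w i) := by
    intro i hwS v hcv
    obtain ⟨r, hir, hrq⟩ := hr (w i)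
    refine ⟨r, hir, ?_, ?_⟩
    · intro u hu hLu
      rw [hrq] at hu
      have huS : u ∈ S := hLS hLu
      exact hwS ((hsep (w i) u hu).1 huS)
    · rw [hrq, ← hcv]
      exact hwc v
  set live1 : ℕ → Set (Language α) := fun i => {X | ∃ v, v ∈ R1 i ∧ c v = X} with hlive1
  set live2 : ℕ → Set (Language α) := fun i => {X | ∃ v, v ∈ R2 i ∧ c v = X} with hlive2
  have hfin1 : ∀ i, (live1 i).Finite := fun i =>
    hCfin.subset (by rintro X ⟨v, _, rfl⟩; exact hcC v)
  have hfin2 : ∀ i, (live2 i).Finite := fun i =>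
    hCfin.subset (by rintro X ⟨v, _, rfl⟩; exact hcC v)
  have hdec : ∀ i, (live1 (i+1)).ncard + (live2 (i+1)).ncard <
      (live1 i).ncard + (live2 i).ncard := by
    intro i
    obtain ⟨⟨hw1, hw2⟩, hpos, hneg⟩ := hstep i (hcon i)
    by_cases hwS : w i ∈ S
    · obtain ⟨hR2, hR1⟩ := hpos hwS
      have hl1 : live1 (i+1) = live1 i := by
        rw [hlive1]
        simp only [hR1]
      have hl2sub : live2 (i+1) ⊆ live2 i \ {c (w i)} := by
        rintro X ⟨v, hv, rfl⟩
        rw [hR2] at hv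
        refine ⟨⟨v, hv.1, rfl⟩, ?_⟩
        intro hX
        rw [Set.mem_singleton_iff] at hX
        exact hv.2 (hkey2 i hwS v hX)
      have hmem : c (w i) ∈ live2 i := ⟨w i, hw2, rfl⟩
      have h2 : (live2 (i+1)).ncard < (live2 i).ncard :=
        lt_of_le_of_lt (Set.ncard_le_ncard hl2sub ((hfin2 i).diff))
          (Set.ncard_diff_singleton_lt_of_mem hmem (hfin2 i))
      rw [hl1]
      omega
    · obtain ⟨hR1, hR2⟩ := hneg hwS
      have hl2 : live2 (i+1) = live2 i := by
        rw [hlive2]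
        simp only [hR2]
      have hl1sub : live1 (i+1) ⊆ live1 i \ {c (w i)} := by
        rintro X ⟨v, hv, rfl⟩
        rw [hR1] at hv
        refine ⟨⟨v, hv.1, rfl⟩, ?_⟩
        intro hX
        rw [Set.mem_singleton_iff] at hX
        exact hv.2 (hkey1 i hwS v hX)
      have hmem : c (w i) ∈ live1 i := ⟨w i, hw1, rfl⟩
      have h1 : (live1 (i+1)).ncard < (live1 i).ncard :=
        lt_of_le_of_lt (Set.ncard_le_ncard hl1sub ((hfin1 i).diff))
          (Set.ncard_diff_singleton_lt_of_mem hmem (hfin1 i))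
      rw [hl2]
      omega
  have hbound : ∀ n, (live1 n).ncard + (live2 n).ncard + n ≤
      (live1 0).ncard + (live2 0).ncard := by
    intro n
    induction n with
    | zero => omega
    | succ n ihn =>
      have := hdec n
      omega
  have := hbound ((live1 0).ncard + (live2 0).ncard + 1)
  omega
end

section
/- There exist regularly separable languages that cannot be proven separate by the i-th prefix abstraction: for R1 = a*b and R2 = a*c, R1 ∩ R2 = ∅, yet for every i ≥ 1 the i-th prefix abstractions of R1 and R2 have nonempty intersection. -/
/-- The regularly separable languages `R1 = a*b` and `R2 = a*c` cannot be proven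
separate by the `i`-th prefix abstraction: they are disjoint, yet for every `i ≥ 1`
the `i`-th prefix abstractions intersect. -/
theorem prefix_abstraction_incomplete {α : Type} (a b c : α)
    (hab : a ≠ b) (hac : a ≠ c) (hbc : b ≠ c)
    (R1 R2 : Language α)
    (h1 : R1 = {w | ∃ n : ℕ, w = List.replicate n a ++ [b]})
    (h2 : R2 = {w | ∃ n : ℕ, w = List.replicate n a ++ [c]})
    (pre : ℕ → Language α → Language α)
    (hpre : ∀ i L, pre i L =
      {p | (p ∈ L ∧ p.length < i) ∨ (p.length = i ∧ ∃ w ∈ L, p <+: w)}) :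
    R1 ⊓ R2 = ⊥ ∧ ∀ i : ℕ, 1 ≤ i → pre i R1 ⊓ pre i R2 ≠ ⊥ := by
  constructor
  · ext w
    refine ⟨fun h => ?_, fun h => absurd h (by exact fun h => h.elim)⟩
    obtain ⟨hw1, hw2⟩ := h
    rw [h1] at hw1; rw [h2] at hw2
    obtain ⟨n, rfl⟩ := hw1
    obtain ⟨m, hm⟩ := hw2
    have : some b = some c := by
      calc some b = (List.replicate n a ++ [b]).getLast? := by
            simp [List.getLast?_append]
        _ = (List.replicate m a ++ [c]).getLast? := by rw [hm]
        _ = some c := by simp [List.getLast?_append]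
    exact hbc (Option.some_injective _ this)
  · intro i hi h
    have : (List.replicate i a : List α) ∈ (⊥ : Language α) := by
      rw [← h]
      refine ⟨?_, ?_⟩
      · rw [hpre]
        right
        refine ⟨by simp, List.replicate i a ++ [b], ?_, ⟨[b], rfl⟩⟩
        rw [h1]; exact ⟨i, rfl⟩
      · rw [hpre]
        right
        refine ⟨by simp, List.replicate i a ++ [c], ?_, ⟨[c], rfl⟩⟩
        rw [h2]; exact ⟨i, rfl⟩
    exact this
end

section
/- For any bounded regular language B = w1* ··· wk* (each wi a nonempty finite word), there exists a word p such that p is not a substring of any word in B. -/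
open List

private noncomputable def ch {α : Type} (x y : α) (w : List α) : α :=
  open Classical in
  if w.getLast? = some x then y else x

private lemma ch_ne {α : Type} (x y : α) (hxy : x ≠ y) (w : List α) (h : w ≠ []) :
    ch x y w ≠ w.getLast h := by
  unfold ch
  rw [List.getLast?_eq_getLast h]
  split
  · rename_i hx
    simp only [Option.some.injEq] at hx
    rw [hx]; exact hxy.symm
  · rename_i hx
    intro hc
    exact hx (by rw [hc])

private lemma rep_not_infix {α : Type} (w : List α) (hw : w ≠ []) (c : α)
    (hc : c ≠ w.getLast hw) :
    ∀ L : List (List α), (∀ u ∈ L, u = w) →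
      ¬ List.replicate w.length c <:+: L.flatten := by
  intro L
  induction L with
  | nil =>
    intro _ h
    rw [List.flatten_nil, List.infix_nil, List.replicate_eq_nil_iff] at h
    exact hw (List.length_eq_zero_iff.mp h)
  | cons u L ih =>
    intro hL h
    have hu : u = w := hL u List.mem_cons_self
    subst hu
    obtain ⟨s, t, h⟩ := h
    rw [List.flatten_cons] at h
    have hwpos : 0 < u.length := List.length_pos_iff.mpr hw
    by_cases hs : s.length < u.length
    · -- the replicate block covers position u.length - 1, the last char of u
      have h1 : (u ++ L.flatten)[u.length - 1]? = some (u.getLast hw) := by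
        rw [List.getElem?_append_left (by omega), List.getElem?_eq_getElem (by omega),
          List.getLast_eq_getElem]
      have h2 : (s ++ (List.replicate u.length c ++ t))[u.length - 1]? = some c := by
        rw [List.getElem?_append_right (by omega),
          List.getElem?_append_left (by simp; omega),
          List.getElem?_replicate, if_pos (by omega)]
      rw [← List.append_assoc, h, h1] at h2
      exact hc (Option.some.injEq _ _ ▸ h2).symm
    · push_neg at hs
      have hpre : u <+: s := by
        apply List.prefix_of_prefix_length_le (l₃ := u ++ L.flatten)
          (List.prefix_append u L.flatten) _ hs
        exact ⟨List.replicate u.length c ++ t, by rw [← List.append_assoc, h]⟩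
      obtain ⟨s', rfl⟩ := hpre
      apply ih (fun v hv => hL v (List.mem_cons_of_mem _ hv))
      refine ⟨s', t, ?_⟩
      have h' := h
      rw [List.append_assoc u s', List.append_assoc, List.append_assoc] at h'
      have h'' := List.append_cancel_left h'
      rw [← List.append_assoc] at h''; exact h''

private lemma infix_append_split {α : Type} {p q a b : List α}
    (h : p ++ q <:+: a ++ b) : p <:+: a ∨ q <:+: b := by
  obtain ⟨s, t, h⟩ := h
  by_cases hle : s.length + p.length ≤ a.length
  · left
    have h1 : s ++ p <+: a ++ b :=
      ⟨q ++ t, by rw [← h]; simp [List.append_assoc]⟩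
    have h2 : s ++ p <+: a := by
      apply List.prefix_of_prefix_length_le h1 (a.prefix_append b)
      simpa using hle
    exact ((List.suffix_append s p).isInfix).trans h2.isInfix
  · right
    have h1 : q ++ t <:+ a ++ b :=
      ⟨s ++ p, by rw [← h]; simp [List.append_assoc]⟩
    have hlen : (q ++ t).length ≤ b.length := by
      have := congrArg List.length h
      simp [List.length_append] at this ⊢
      omega
    have h2 : q ++ t <:+ b :=
      List.suffix_of_suffix_length_le h1 (List.suffix_append a b) hlen
    exact (List.prefix_append q t).isInfix.trans h2.isInfix

/-- For any bounded regular language `B = w1* ⋯ wk*` (each `wi` a nonempty word) over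
an alphabet with at least two letters, there is a word `p` that is not a substring
(infix) of any word in `B`. -/
theorem bounded_language_missing_substring {α : Type} (x y : α) (hxy : x ≠ y)
    (ws : List (List α)) (hne : ∀ w ∈ ws, w ≠ [])
    (B : Language α) (hB : B = (ws.map (fun w => KStar.kstar ({w} : Language α))).prod) :
    ∃ p : List α, ∀ t ∈ B, ¬ p <:+: t := by
  subst hB
  refine ⟨(ws.map (fun w => List.replicate w.length (ch x y w))).flatten ++ [x], ?_⟩
  induction ws with
  | nil =>
    intro t ht hinf
    rw [List.map_nil, List.prod_nil, Language.mem_one] at ht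
    subst ht
    rw [List.infix_nil] at hinf
    simp at hinf
  | cons w ws ih =>
    intro t ht hinf
    rw [List.map_cons, List.prod_cons, Language.mem_mul] at ht
    obtain ⟨u, hu, v, hv, rfl⟩ := ht
    rw [List.map_cons, List.flatten_cons, List.append_assoc] at hinf
    rcases infix_append_split hinf with h | h
    · obtain ⟨L, rfl, hL⟩ := Language.mem_kstar.mp hu
      exact rep_not_infix w (hne w List.mem_cons_self)
        (ch x y w) (ch_ne x y hxy w _) L (fun u hu => hL u hu) h
    · exact ih (fun w hw => hne w (List.mem_cons_of_mem _ hw)) v hv h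
end

section
/- Let L1 = (a|b)*a and L2 = (a|b)*b, and let B1, ..., Bn be any finite collection of bounded regular languages, removed from the approximations. Then L1 \ (B1 ∪ ... ∪ Bn) and L2 \ (B1 ∪ ... ∪ Bn) are both nonempty. Hence no finite sequence of bounded-language refinements can show the approximations empty. -/
private lemma lcegar_growth (L K : ℕ) : ∃ m, L * (m + 2) ^ K < 2 ^ m := by
  set s := L * (K + 3) ^ K with hs
  refine ⟨(K + 1) * s, ?_⟩
  calc L * ((K + 1) * s + 2) ^ K
      ≤ L * ((K + 3) * (s + 1)) ^ K := by gcongr; nlinarith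
    _ = s * (s + 1) ^ K := by rw [mul_pow, hs]; ring
    _ < (s + 1) * (s + 1) ^ K := by
        have : (0:ℕ) < (s + 1) ^ K := pow_pos (by omega) K
        exact Nat.mul_lt_mul_of_lt_of_le (Nat.lt_succ_self s) le_rfl this
    _ = (s + 1) ^ (K + 1) := by ring
    _ ≤ (2 ^ s) ^ (K + 1) := by
        gcongr
        exact Nat.lt_two_pow_self (n := s)
    _ = 2 ^ ((K + 1) * s) := by rw [← pow_mul, mul_comm]

private lemma lcegar_decomp {α : Type} (ws : List (List α)) (w : List α)
    (h : w ∈ (ws.map (fun v => KStar.kstar ({v} : Language α))).prod) :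
    ∃ f : List ℕ, f.length = ws.length ∧
      w = (List.zipWith (fun v e => (List.replicate e v).flatten) ws f).flatten := by
  induction ws generalizing w with
  | nil =>
    simp only [List.map_nil, List.prod_nil] at h
    rw [Language.mem_one] at h
    exact ⟨[], rfl, by simp [h]⟩
  | cons v ws ih =>
    rw [List.map_cons, List.prod_cons] at h
    obtain ⟨u, hu, t, ht, rfl⟩ := Language.mem_mul.1 h
    obtain ⟨S, rfl, hS⟩ := Language.mem_kstar.1 hu
    obtain ⟨f, hl, rfl⟩ := ih t ht
    have hSrep : S = List.replicate S.length v := by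
      apply List.eq_replicate_of_mem
      intro y hy
      exact hS y hy
    refine ⟨S.length :: f, by simp [hl], ?_⟩
    simp only [List.zipWith_cons_cons, List.flatten_cons]
    rw [← hSrep]

/-- Let `L1 = (a|b)*a` and `L2 = (a|b)*b`. For any finite collection of bounded
regular languages `B1, …, Bn`, both `L1 \ (B1 ∪ ⋯ ∪ Bn)` and `L2 \ (B1 ∪ ⋯ ∪ Bn)`
are nonempty; hence no finite sequence of bounded-language refinements can empty
the approximations. -/
theorem lcegar_cannot_separate {α : Type} (a b : α) (hab : a ≠ b)
    (L1 L2 : Language α)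
    (h1 : L1 = {w | ∃ u : List α, w = u ++ [a]})
    (h2 : L2 = {w | ∃ u : List α, w = u ++ [b]})
    (Bs : List (List (List α))) (hne : ∀ ws ∈ Bs, ∀ w ∈ ws, w ≠ []) :
    (∃ w ∈ L1, ∀ ws ∈ Bs, w ∉ (ws.map (fun v => KStar.kstar ({v} : Language α))).prod) ∧
    (∃ w ∈ L2, ∀ ws ∈ Bs, w ∉ (ws.map (fun v => KStar.kstar ({v} : Language α))).prod) := by
  classical
  -- main claim: for any last letter c, some word ending in c avoids all the Bᵢ
  have main : ∀ c : α, ∃ u : List α,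
      ∀ ws ∈ Bs, (u ++ [c]) ∉ (ws.map (fun v => KStar.kstar ({v} : Language α))).prod := by
    intro c
    set K := (Bs.map List.length).sum with hK
    obtain ⟨m, hm⟩ := lcegar_growth Bs.length K
    -- the "bad" set: all words of the bounded languages built from exponents < m+2
    set D : List (List α) → Finset (List α) := fun ws =>
      Finset.image (fun g : Fin ws.length → Fin (m + 2) =>
        (List.zipWith (fun v e => (List.replicate e v).flatten) ws
          (List.ofFn fun i => ((g i : ℕ)))).flatten) Finset.univ with hD
    set F : Finset (List α) := Bs.toFinset.biUnion D with hF
    -- candidate words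
    set C : Finset (List α) :=
      Finset.image (fun f : Fin m → Bool =>
        (List.ofFn fun i => cond (f i) a b) ++ [c]) Finset.univ with hC
    have hCcard : C.card = 2 ^ m := by
      rw [hC, Finset.card_image_of_injective _ ?_, Finset.card_univ]
      · simp
      · intro f g hfg
        simp only [List.append_cancel_right_eq, List.ofFn_inj] at hfg
        funext i
        have := congrFun hfg i
        cases hf : f i <;> cases hg : g i <;> simp_all
    have hFcard : F.card < 2 ^ m := by
      calc F.card ≤ Bs.toFinset.sum (fun ws => (D ws).card) := Finset.card_biUnion_le
        _ ≤ Bs.toFinset.sum (fun _ => (m + 2) ^ K) := by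
            apply Finset.sum_le_sum
            intro ws hws
            rw [List.mem_toFinset] at hws
            have h1 : (D ws).card ≤ (m + 2) ^ ws.length := by
              calc (D ws).card ≤ (Finset.univ : Finset (Fin ws.length → Fin (m+2))).card :=
                    Finset.card_image_le
                _ = (m + 2) ^ ws.length := by simp
            have h2 : ws.length ≤ K := by
              rw [hK]
              exact List.single_le_sum (fun x _ => Nat.zero_le x) _
                (List.mem_map_of_mem (f := List.length) hws)
            exact h1.trans (Nat.pow_le_pow_right (by omega) h2)
        _ ≤ Bs.length * (m + 2) ^ K := by
            rw [Finset.sum_const, smul_eq_mul]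
            exact Nat.mul_le_mul_right _ (Bs.toFinset_card_le)
        _ < 2 ^ m := hm
    -- pick a candidate not in F
    have : ∃ w ∈ C, w ∉ F := by
      by_contra hcon
      push_neg at hcon
      have : C ⊆ F := hcon
      have := Finset.card_le_card this
      omega
    obtain ⟨w, hwC, hwF⟩ := this
    rw [hC, Finset.mem_image] at hwC
    obtain ⟨f, -, rfl⟩ := hwC
    refine ⟨List.ofFn fun i => cond (f i) a b, ?_⟩
    intro ws hws hmem
    apply hwF
    set w := (List.ofFn fun i => cond (f i) a b) ++ [c] with hw
    obtain ⟨e, helen, hweq⟩ := lcegar_decomp ws w hmem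
    -- each exponent is at most w.length = m+1 < m+2
    have hbound : ∀ i (hi : i < e.length), e[i] < m + 2 := by
      intro i hi
      have hiw : i < ws.length := helen ▸ hi
      have hlenw : w.length = m + 1 := by simp [hw]
      have hpart : e[i] * (ws[i]).length ≤ w.length := by
        rw [hweq, List.length_flatten]
        have hizip : i < (List.zipWith (fun v e => (List.replicate e v).flatten) ws e).length := by
          rw [List.length_zipWith]; omega
        have : (List.zipWith (fun v e => (List.replicate e v).flatten) ws e)[i].length
            = e[i] * (ws[i]).length := by
          rw [List.getElem_zipWith]; simp [Nat.mul_comm]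
        rw [← this]
        exact List.single_le_sum (fun x _ => Nat.zero_le x) _
          (List.mem_map_of_mem (f := List.length) (List.getElem_mem hizip))
      have hpos : 0 < (ws[i]).length := by
        have := hne ws hws ws[i] (List.getElem_mem hiw)
        exact List.length_pos_iff.2 this
      have : e[i] ≤ w.length := le_trans (Nat.le_mul_of_pos_right _ hpos) hpart
      omega
    rw [hF, Finset.mem_biUnion]
    refine ⟨ws, List.mem_toFinset.2 hws, ?_⟩
    rw [hD, Finset.mem_image]
    refine ⟨fun i => ⟨e[(i : ℕ)]'(by rw [helen]; exact i.isLt), hbound _ _⟩, Finset.mem_univ _, ?_⟩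
    have hofn : (List.ofFn fun i : Fin ws.length =>
        ((⟨e[(i : ℕ)]'(by rw [helen]; exact i.isLt), hbound _ _⟩ : Fin (m + 2)) : ℕ)) = e := by
      apply List.ext_getElem
      · simp [helen]
      · intro n h₁ h₂
        simp [List.getElem_ofFn]
    rw [hofn, ← hweq]
  obtain ⟨u1, hu1⟩ := main a
  obtain ⟨u2, hu2⟩ := main b
  exact ⟨⟨u1 ++ [a], h1 ▸ ⟨u1, rfl⟩, hu1⟩, ⟨u2 ++ [b], h2 ▸ ⟨u2, rfl⟩, hu2⟩⟩
end
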